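/- arXiv:2104.03458 — 9 statements merged into one kernel-verified Lean document; each statement's English description precedes it below -/
import Mathlib

section
/- Let α, β, γ, δ be measurable spaces and let F : α × β → γ × δ be a measurable bijection whose inverse is also measurable. Define F̄ : γ × α × β → γ × α × β by F̄(a,b,c) = (d,e,f), where (d,g) := F(b,c) and (e,f) := F⁻¹(a,g), and write F̄^{(2,3)}(a,b,c) := (e,f). Then for any probability measures μ̃ on γ, μ on α and ν on β, the following three conditions are equivalent: (a) the pushforward of the product measure μ̃ ⊗ μ ⊗ ν under F̄^{(2,3)} equals μ ⊗ ν; (b) the pushforward of μ̃ ⊗ μ ⊗ ν under F̄ equals μ̃ ⊗ μ ⊗ ν; (c) there exists a probability measure ν̃ on δ such that the pushforward of μ ⊗ ν under F equals μ̃ ⊗ ν̃. -/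
open MeasureTheory

/-- Proposition 2.8 of [CS2]: equivalence of stationarity for `F̄^{(2,3)}`, invariance for
`F̄`, and the detailed balance condition for `F`. -/
theorem stmt_0 {α β γ δ : Type*} [MeasurableSpace α] [MeasurableSpace β]
    [MeasurableSpace γ] [MeasurableSpace δ]
    (F : α × β → γ × δ) (Finv : γ × δ → α × β)
    (hF : Measurable F) (hFinv : Measurable Finv)
    (hleft : Function.LeftInverse Finv F) (hright : Function.RightInverse Finv F)
    (μt : Measure γ) (μ : Measure α) (ν : Measure β)
    [IsProbabilityMeasure μt] [IsProbabilityMeasure μ] [IsProbabilityMeasure ν] :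
    ((Measure.map (fun p : γ × α × β => Finv (p.1, (F p.2).2)) (μt.prod (μ.prod ν))
        = μ.prod ν) ↔
      (Measure.map (fun p : γ × α × β => ((F p.2).1, Finv (p.1, (F p.2).2)))
          (μt.prod (μ.prod ν)) = μt.prod (μ.prod ν))) ∧
    ((Measure.map (fun p : γ × α × β => Finv (p.1, (F p.2).2)) (μt.prod (μ.prod ν))
        = μ.prod ν) ↔
      (∃ νt : Measure δ, IsProbabilityMeasure νt ∧
        Measure.map F (μ.prod ν) = μt.prod νt)) := by
  set π := μ.prod ν with hπdef
  have hFsnd : Measurable fun x : α × β => (F x).2 := measurable_snd.comp hF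
  have hT23 : Measurable fun p : γ × α × β => Finv (p.1, (F p.2).2) :=
    hFinv.comp (measurable_fst.prodMk (hFsnd.comp measurable_snd))
  have hFinvF : Measure.map Finv (Measure.map F π) = π := by
    rw [Measure.map_map hFinv hF]
    have : Finv ∘ F = id := funext hleft
    rw [this, Measure.map_id]
  -- key computation:  map T23 (μt ⊗ π) = map Finv (μt ⊗ (snd_* F_* π))
  have key : Measure.map (fun p : γ × α × β => Finv (p.1, (F p.2).2)) (μt.prod π)
      = Measure.map Finv (μt.prod (Measure.map (fun x : α × β => (F x).2) π)) := by
    have he : (fun p : γ × α × β => Finv (p.1, (F p.2).2))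
        = Finv ∘ (Prod.map id (fun x : α × β => (F x).2)) := rfl
    rw [he, ← Measure.map_map hFinv (measurable_id.prodMap hFsnd),
      ← Measure.map_prod_map _ _ measurable_id hFsnd, Measure.map_id]
  have hνtsnd : Measure.map (fun x : α × β => (F x).2) π
      = Measure.map Prod.snd (Measure.map F π) := by
    rw [Measure.map_map measurable_snd hF]; rfl
  -- (c) → (a)
  have h_c_to_a : ∀ νt : Measure δ, IsProbabilityMeasure νt → Measure.map F π = μt.prod νt →
      Measure.map (fun p : γ × α × β => Finv (p.1, (F p.2).2)) (μt.prod π) = π := by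
    intro νt hνtp hc
    have hνt : Measure.map (fun x : α × β => (F x).2) π = νt := by
      rw [hνtsnd, hc, Measure.map_snd_prod, measure_univ, one_smul]
    rw [key, hνt, ← hc, hFinvF]
  -- (a) → (c)
  have h_a_to_c : Measure.map (fun p : γ × α × β => Finv (p.1, (F p.2).2)) (μt.prod π) = π →
      ∃ νt : Measure δ, IsProbabilityMeasure νt ∧ Measure.map F π = μt.prod νt := by
    intro ha
    refine ⟨Measure.map (fun x : α × β => (F x).2) π,
      Measure.isProbabilityMeasure_map hFsnd.aemeasurable, ?_⟩
    have hπeq : π = Measure.map Finv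
        (μt.prod (Measure.map (fun x : α × β => (F x).2) π)) := by rw [← key, ha]
    calc Measure.map F π
        = Measure.map F (Measure.map Finv
            (μt.prod (Measure.map (fun x : α × β => (F x).2) π))) := by rw [← hπeq]
      _ = μt.prod (Measure.map (fun x : α × β => (F x).2) π) := by
          rw [Measure.map_map hF hFinv]
          have : F ∘ Finv = id := funext hright
          rw [this, Measure.map_id]
  -- (c) → (b)
  have h_c_to_b : ∀ νt : Measure δ, IsProbabilityMeasure νt → Measure.map F π = μt.prod νt →
      Measure.map (fun p : γ × α × β => ((F p.2).1, Finv (p.1, (F p.2).2)))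
        (μt.prod π) = μt.prod π := by
    intro νt hνtp hc
    have hS : Measurable fun q : γ × γ × δ => (q.2.1, Finv (q.1, q.2.2)) := by
      apply Measurable.prodMk
      · exact measurable_fst.comp measurable_snd
      · exact hFinv.comp (measurable_fst.prodMk (measurable_snd.comp measurable_snd))
    have hR : Measurable fun q : γ × γ × δ => (q.2.1, (q.1, q.2.2)) := by
      apply Measurable.prodMk
      · exact measurable_fst.comp measurable_snd
      · exact measurable_fst.prodMk (measurable_snd.comp measurable_snd)
    have hΦ : Measure.map (Prod.map id F) (μt.prod π) = μt.prod (μt.prod νt) := by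
      rw [← Measure.map_prod_map _ _ measurable_id hF, Measure.map_id, hc]
    have hTcomp : Measure.map (fun p : γ × α × β => ((F p.2).1, Finv (p.1, (F p.2).2)))
        (μt.prod π)
        = Measure.map (fun q : γ × γ × δ => (q.2.1, Finv (q.1, q.2.2)))
            (μt.prod (μt.prod νt)) := by
      have he : (fun p : γ × α × β => ((F p.2).1, Finv (p.1, (F p.2).2)))
          = (fun q : γ × γ × δ => (q.2.1, Finv (q.1, q.2.2))) ∘ (Prod.map id F) := rfl
      rw [he, ← Measure.map_map hS (measurable_id.prodMap hF), hΦ]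
    -- push μt ⊗ μt ⊗ νt through the shuffle R
    have hRmap : Measure.map (fun q : γ × γ × δ => (q.2.1, (q.1, q.2.2)))
        (μt.prod (μt.prod νt)) = μt.prod (μt.prod νt) := by
      have h1 : Measure.map (MeasurableEquiv.prodAssoc.symm :
            γ × γ × δ ≃ᵐ (γ × γ) × δ) (μt.prod (μt.prod νt)) = (μt.prod μt).prod νt := by
        rw [← Measure.prodAssoc_prod (μ := μt) (ν := μt) (τ := νt),
          Measure.map_map MeasurableEquiv.prodAssoc.symm.measurable
            MeasurableEquiv.prodAssoc.measurable]
        have : (MeasurableEquiv.prodAssoc.symm : γ × γ × δ → (γ × γ) × δ) ∘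
            (MeasurableEquiv.prodAssoc : (γ × γ) × δ → γ × γ × δ) = id := by
          funext x; simp
        rw [this, Measure.map_id]
      have h2 : Measure.map (Prod.map (Prod.swap : γ × γ → γ × γ) (id : δ → δ))
          ((μt.prod μt).prod νt) = (μt.prod μt).prod νt := by
        rw [← Measure.map_prod_map _ _ measurable_swap measurable_id,
          Measure.prod_swap, Measure.map_id]
      have he : (fun q : γ × γ × δ => (q.2.1, (q.1, q.2.2)))
          = (MeasurableEquiv.prodAssoc : (γ × γ) × δ → γ × γ × δ) ∘
            ((Prod.map Prod.swap id) ∘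
              (MeasurableEquiv.prodAssoc.symm : γ × γ × δ → (γ × γ) × δ)) := rfl
      rw [he, ← Measure.map_map MeasurableEquiv.prodAssoc.measurable
          ((measurable_swap.prodMap measurable_id).comp
            MeasurableEquiv.prodAssoc.symm.measurable),
        ← Measure.map_map (measurable_swap.prodMap measurable_id)
          MeasurableEquiv.prodAssoc.symm.measurable,
        h1, h2, Measure.prodAssoc_prod]
    have hS2 : Measure.map (Prod.map (id : γ → γ) Finv) (μt.prod (μt.prod νt))
        = μt.prod π := by
      rw [← Measure.map_prod_map _ _ measurable_id hFinv, Measure.map_id, ← hc, hFinvF]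
    have he2 : (fun q : γ × γ × δ => (q.2.1, Finv (q.1, q.2.2)))
        = (Prod.map (id : γ → γ) Finv) ∘ (fun q : γ × γ × δ => (q.2.1, (q.1, q.2.2))) := rfl
    rw [hTcomp, he2, ← Measure.map_map (measurable_id.prodMap hFinv) hR, hRmap, hS2]
  -- (b) → (a)
  have h_b_to_a : Measure.map (fun p : γ × α × β => ((F p.2).1, Finv (p.1, (F p.2).2)))
        (μt.prod π) = μt.prod π →
      Measure.map (fun p : γ × α × β => Finv (p.1, (F p.2).2)) (μt.prod π) = π := by
    intro hb
    have hT : Measurable fun p : γ × α × β => ((F p.2).1, Finv (p.1, (F p.2).2)) :=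
      ((measurable_fst.comp (hF.comp measurable_snd)).prodMk hT23)
    have he : (fun p : γ × α × β => Finv (p.1, (F p.2).2))
        = Prod.snd ∘ (fun p : γ × α × β => ((F p.2).1, Finv (p.1, (F p.2).2))) := rfl
    rw [he, ← Measure.map_map measurable_snd hT, hb, Measure.map_snd_prod,
      measure_univ, one_smul]
  constructor
  · constructor
    · intro ha
      obtain ⟨νt, hνtp, hc⟩ := h_a_to_c ha
      exact h_c_to_b νt hνtp hc
    · exact h_b_to_a
  · constructor
    · exact h_a_to_c
    · rintro ⟨νt, hνtp, hc⟩
      exact h_c_to_a νt hνtp hc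
end

section
/- Let F : ℝ × ℝ → ℝ × ℝ be a measurable bijection with measurable inverse, let f₁ : ℝ → ℝ, f₂ : ℝ → ℝ, f̃₁ : ℝ → ℝ be measurable functions, and let R : ℝ × ℝ × ℝ → ℝ × ℝ be a measurable map satisfying R(f̃₁(a), f₁(b), f₂(c)) = (f₁ × f₂)(F̄^{(2,3)}(a,b,c)) for all (a,b,c) ∈ ℝ³. If (μ', ν', μ̃', ν̃') is a quadruple of probability measures on ℝ such that the pushforward of μ' ⊗ ν' under F equals μ̃' ⊗ ν̃', then, setting μ := Measure.map f₁ μ', ν := Measure.map f₂ ν' and μ̃ := Measure.map f̃₁ μ̃', the pushforward of μ̃ ⊗ μ ⊗ ν under R equals μ ⊗ ν. -/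
open MeasureTheory

/-- Lemma 5.6 (change of variables for stationary measures): if `R ∘ (f̃₁ × f₁ × f₂)
= (f₁ × f₂) ∘ F̄^{(2,3)}` and `(μ', ν', μ̃', ν̃')` satisfies the detailed balance condition
for `F`, then the pushed-forward triple is stationary for `R`. -/
theorem stmt_1 (F : ℝ × ℝ → ℝ × ℝ) (Finv : ℝ × ℝ → ℝ × ℝ)
    (hF : Measurable F) (hFinv : Measurable Finv)
    (hleft : Function.LeftInverse Finv F) (hright : Function.RightInverse Finv F)
    (f₁ f₂ ft₁ : ℝ → ℝ) (hf₁ : Measurable f₁) (hf₂ : Measurable f₂) (hft₁ : Measurable ft₁)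
    (R : ℝ × ℝ × ℝ → ℝ × ℝ) (hR : Measurable R)
    (hRF : ∀ a b c : ℝ, R (ft₁ a, f₁ b, f₂ c)
      = ((f₁ (Finv (a, (F (b, c)).2)).1), (f₂ (Finv (a, (F (b, c)).2)).2)))
    (μ' ν' μt' νt' : Measure ℝ)
    [IsProbabilityMeasure μ'] [IsProbabilityMeasure ν']
    [IsProbabilityMeasure μt'] [IsProbabilityMeasure νt']
    (hdb : Measure.map F (μ'.prod ν') = μt'.prod νt') :
    Measure.map R ((Measure.map ft₁ μt').prod ((Measure.map f₁ μ').prod (Measure.map f₂ ν')))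
      = (Measure.map f₁ μ').prod (Measure.map f₂ ν') := by
  set G : ℝ × (ℝ × ℝ) → ℝ × ℝ := fun p => Finv (p.1, (F p.2).2) with hG
  have hGmeas : Measurable G :=
    hFinv.comp (measurable_fst.prodMk ((measurable_snd.comp hF).comp measurable_snd))
  have hGmap : Measure.map G (μt'.prod (μ'.prod ν')) = μ'.prod ν' := by
    have h1 : G = (Finv ∘ (fun p : ℝ × (ℝ × ℝ) => (p.1, p.2.2))) ∘ Prod.map id F := by
      funext p; simp [hG, Prod.map]
    rw [h1, ← Measure.map_map (hFinv.comp (measurable_fst.prodMk measurable_snd.snd))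
      (measurable_id.prodMap hF),
      ← Measure.map_prod_map _ _ measurable_id hF, Measure.map_id, hdb,
      ← Measure.map_map hFinv (measurable_fst.prodMk measurable_snd.snd)]
    have h2 : Measure.map (fun p : ℝ × (ℝ × ℝ) => (p.1, p.2.2)) (μt'.prod (μt'.prod νt'))
        = μt'.prod νt' := by
      have : (fun p : ℝ × (ℝ × ℝ) => (p.1, p.2.2)) = Prod.map (id : ℝ → ℝ) Prod.snd := rfl
      rw [this, ← Measure.map_prod_map _ _ measurable_id measurable_snd, Measure.map_id,
        Measure.map_snd_prod]
      simp
    rw [h2, ← hdb, Measure.map_map hFinv hF]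
    have : Finv ∘ F = id := funext hleft
    rw [this, Measure.map_id]
  calc Measure.map R ((Measure.map ft₁ μt').prod ((Measure.map f₁ μ').prod (Measure.map f₂ ν')))
      = Measure.map R (Measure.map (Prod.map ft₁ (Prod.map f₁ f₂)) (μt'.prod (μ'.prod ν'))) := by
        rw [Measure.map_prod_map _ _ hf₁ hf₂, Measure.map_prod_map _ _ hft₁ (hf₁.prodMap hf₂)]
    _ = Measure.map (R ∘ Prod.map ft₁ (Prod.map f₁ f₂)) (μt'.prod (μ'.prod ν')) :=
        Measure.map_map hR (hft₁.prodMap (hf₁.prodMap hf₂))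
    _ = Measure.map (Prod.map f₁ f₂ ∘ G) (μt'.prod (μ'.prod ν')) := by
        congr 1
        funext p
        simpa [Prod.map, hG] using hRF p.1 p.2.1 p.2.2
    _ = Measure.map (Prod.map f₁ f₂) (Measure.map G (μt'.prod (μ'.prod ν'))) :=
        (Measure.map_map (hf₁.prodMap hf₂) hGmeas).symm
    _ = (Measure.map f₁ μ').prod (Measure.map f₂ ν') := by
        rw [hGmap, ← Measure.map_prod_map _ _ hf₁ hf₂]
end

section
/- For all a, b, c ∈ ℝ, one has R^zero_{(0,1)}(−a, −b, −c) = (−e, −f), where (e,f) := F̄_{E,AL}^{(2,3)}(a,b,c) is obtained by setting (d,g) := F_{E,AL}(b,c) and (e,f) := F_{E,AL}⁻¹(a,g). Explicitly, R^zero_{(0,1)}(−a,−b,−c) = (−(a + (b−c) − min(0, b−c)), −(a − min(0, b−c))). -/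
/-- The zero-temperature map `R^zero_{(0,1)}(a,b,c) = (min(a, a+b−c), min(a+c−b, a))`. -/
noncomputable def Rz01 : ℝ × ℝ × ℝ → ℝ × ℝ :=
  fun p => (min p.1 (p.1 + p.2.1 - p.2.2), min (p.1 + p.2.2 - p.2.1) p.1)

/-- `F_{E,AL}(x,y) = (min(x,y), x−y)`. -/
noncomputable def FEAL : ℝ × ℝ → ℝ × ℝ := fun p => (min p.1 p.2, p.1 - p.2)

/-- `F_{E,AL}⁻¹(x,y) = (x + y − min(0,y), x − min(0,y))`. -/
noncomputable def FEALinv : ℝ × ℝ → ℝ × ℝ :=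
  fun p => (p.1 + p.2 - min 0 p.2, p.1 - min 0 p.2)

/-- Proposition 3.4(a): `R^zero_{(0,1)} ∘ (I^zero)³ = (I^zero)² ∘ F̄_{E,AL}^{(2,3)}`. -/
theorem stmt_6 (a b c : ℝ) :
    Rz01 (-a, -b, -c)
      = (-(FEALinv (a, (FEAL (b, c)).2)).1, -(FEALinv (a, (FEAL (b, c)).2)).2) ∧
    Rz01 (-a, -b, -c)
      = (-(a + (b - c) - min 0 (b - c)), -(a - min 0 (b - c))) := by
  have key : Rz01 (-a, -b, -c)
      = (-(a + (b - c) - min 0 (b - c)), -(a - min 0 (b - c))) := by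
    simp only [Rz01, Prod.mk.injEq]
    rcases le_total (b - c) 0 with h | h
    · rw [min_eq_right h]
      constructor
      · rw [min_eq_left (by linarith : -a ≤ -a + -b - -c)]; ring
      · rw [min_eq_left (by linarith : -a + -c - -b ≤ -a)]; ring
    · rw [min_eq_left h]
      constructor
      · rw [min_eq_right (by linarith : -a + -b - -c ≤ -a)]; ring
      · rw [min_eq_right (by linarith : -a ≤ -a + -c - -b)]; ring
  exact ⟨by simpa [FEAL, FEALinv] using key, key⟩
end

section
/- Let ρ, σ, τ > 0. Then the pushforward of the product measure IG(ρ,τ) ⊗ IG(σ,τ) under the map F_{(0,1)}(x,y) = (xy/(x+y), y/x) equals the product measure IG(ρ+σ,τ) ⊗ Be'(ρ,σ); that is, the quadruple (μ, ν, μ̃, ν̃) = (IG(ρ,τ), IG(σ,τ), IG(ρ+σ,τ), Be'(ρ,σ)) satisfies the detailed balance condition F_{(0,1)}(μ × ν) = μ̃ × ν̃. -/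
open MeasureTheory
open Set

/-- The beta function `B(a,b) = Γ(a)Γ(b)/Γ(a+b)`. -/
noncomputable def betaFn (a b : ℝ) : ℝ := Real.Gamma a * Real.Gamma b / Real.Gamma (a + b)

/-- The inverse-gamma distribution `IG(λ,c)`, with density `(c^λ/Γ(λ)) x^{−λ−1} e^{−c/x}`
on `(0,∞)`. -/
noncomputable def IG (l c : ℝ) : Measure ℝ :=
  volume.withDensity fun x =>
    ENNReal.ofReal
      (if 0 < x then c ^ l / Real.Gamma l * x ^ (-l - 1) * Real.exp (-c / x) else 0)

/-- The beta prime distribution `Be'(λ₁,λ₂)`, with density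
`(1/B(λ₁,λ₂)) x^{λ₁−1} (1+x)^{−λ₁−λ₂}` on `(0,∞)`. -/
noncomputable def BePrime (l₁ l₂ : ℝ) : Measure ℝ :=
  volume.withDensity fun x =>
    ENNReal.ofReal
      (if 0 < x then (betaFn l₁ l₂)⁻¹ * x ^ (l₁ - 1) * (1 + x) ^ (-l₁ - l₂) else 0)

/-- `F_{(0,1)}(x,y) = (xy/(x+y), y/x)`. -/
noncomputable def F01 : ℝ × ℝ → ℝ × ℝ := fun p => (p.1 * p.2 / (p.1 + p.2), p.2 / p.1)

/-! ### Auxiliary material -/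

/-- The open positive quadrant. -/
def S2 : Set (ℝ × ℝ) := Ioi 0 ×ˢ Ioi 0

lemma measurableSet_S2 : MeasurableSet S2 := measurableSet_Ioi.prod measurableSet_Ioi

lemma F01_measurable : Measurable F01 :=
  ((measurable_fst.mul measurable_snd).div (measurable_fst.add measurable_snd)).prod
    (measurable_snd.div measurable_fst)

/-- The inverse of `F01` on the positive quadrant. -/
noncomputable def G01 : ℝ × ℝ → ℝ × ℝ := fun q => (q.1 * (1 + q.2) / q.2, q.1 * (1 + q.2))

lemma G01_F01 (p : ℝ × ℝ) (hp : p ∈ S2) : G01 (F01 p) = p := by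
  obtain ⟨hx, hy⟩ := hp
  simp only [Set.mem_Ioi] at hx hy
  have h1 : p.1 ≠ 0 := hx.ne'
  have h2 : p.2 ≠ 0 := hy.ne'
  have h3 : p.1 + p.2 ≠ 0 := by positivity
  simp only [G01, F01]
  refine Prod.ext ?_ ?_ <;> field_simp

lemma F01_mem (p : ℝ × ℝ) (hp : p ∈ S2) : F01 p ∈ S2 := by
  obtain ⟨hx, hy⟩ := hp
  simp only [Set.mem_Ioi] at hx hy
  constructor <;> simp only [F01, Set.mem_Ioi] <;> positivity

lemma F01_G01 (q : ℝ × ℝ) (hq : q ∈ S2) : F01 (G01 q) = q := by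
  obtain ⟨hs, hw⟩ := hq
  simp only [Set.mem_Ioi] at hs hw
  have h1 : q.1 ≠ 0 := hs.ne'
  have h2 : q.2 ≠ 0 := hw.ne'
  have h3 : (1:ℝ) + q.2 ≠ 0 := by positivity
  simp only [G01, F01]
  have hden : q.1 * (1 + q.2) / q.2 + q.1 * (1 + q.2) ≠ 0 := by
    have : (0:ℝ) < q.1 * (1 + q.2) / q.2 + q.1 * (1 + q.2) := by positivity
    exact this.ne'
  refine Prod.ext ?_ ?_ <;> field_simp <;> ring

lemma G01_mem (q : ℝ × ℝ) (hq : q ∈ S2) : G01 q ∈ S2 := by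
  obtain ⟨hs, hw⟩ := hq
  simp only [Set.mem_Ioi] at hs hw
  constructor <;> simp only [G01, Set.mem_Ioi] <;> positivity

lemma F01_injOn : Set.InjOn F01 S2 := fun p hp q hq h => by
  rw [← G01_F01 p hp, ← G01_F01 q hq, h]

lemma F01_image : F01 '' S2 = S2 := by
  apply Set.Subset.antisymm
  · rintro _ ⟨p, hp, rfl⟩; exact F01_mem p hp
  · intro q hq; exact ⟨G01 q, G01_mem q hq, F01_G01 q hq⟩

/-- The Jacobian matrix of `F01`, as a continuous linear map. -/
noncomputable def fder (p : ℝ × ℝ) : ℝ × ℝ →L[ℝ] ℝ × ℝ :=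
  LinearMap.toContinuousLinearMap <|
    Matrix.toLin (Module.Basis.finTwoProd ℝ) (Module.Basis.finTwoProd ℝ)
      !![p.2 ^ 2 / (p.1 + p.2) ^ 2, p.1 ^ 2 / (p.1 + p.2) ^ 2; -p.2 / p.1 ^ 2, p.1⁻¹]

lemma fder_apply (p v : ℝ × ℝ) :
    fder p v = (p.2 ^ 2 / (p.1 + p.2) ^ 2 * v.1 + p.1 ^ 2 / (p.1 + p.2) ^ 2 * v.2,
      -p.2 / p.1 ^ 2 * v.1 + p.1⁻¹ * v.2) := by
  simp [fder, Matrix.toLin_apply, Module.Basis.finTwoProd, Module.Basis.ofEquivFun, Matrix.mulVec,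
    dotProduct, Fin.sum_univ_two,
    Finsupp.equivFunOnFinite_symm_apply_apply, Finsupp.single_apply]

lemma fder_det (p : ℝ × ℝ) (hx : 0 < p.1) (hy : 0 < p.2) :
    (fder p).det = p.2 / (p.1 * (p.1 + p.2)) := by
  have h1 : p.1 ≠ 0 := hx.ne'
  have h2 : (p.1 + p.2) ≠ 0 := by positivity
  rw [fder]
  rw [ContinuousLinearMap.det, LinearMap.coe_toContinuousLinearMap, LinearMap.det_toLin,
    Matrix.det_fin_two_of]
  field_simp
  ring

lemma hasfd (p : ℝ × ℝ) (hx : 0 < p.1) (hy : 0 < p.2) : HasFDerivAt F01 (fder p) p := by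
  have h1 : p.1 ≠ 0 := hx.ne'
  have h2 : (p.1 + p.2) ≠ 0 := by positivity
  have hfst : HasFDerivAt (fun q : ℝ × ℝ => q.1) (ContinuousLinearMap.fst ℝ ℝ ℝ) p :=
    hasFDerivAt_fst
  have hsnd : HasFDerivAt (fun q : ℝ × ℝ => q.2) (ContinuousLinearMap.snd ℝ ℝ ℝ) p :=
    hasFDerivAt_snd
  have ha := hfst.mul hsnd
  have hb := (hasDerivAt_inv h2).comp_hasFDerivAt p (hfst.add hsnd)
  have hc := (hasDerivAt_inv h1).comp_hasFDerivAt p hfst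
  have hA := ha.mul hb
  have hB := hsnd.mul hc
  have hF : HasFDerivAt (fun q : ℝ × ℝ => (q.1 * q.2 * (q.1 + q.2)⁻¹, q.2 * q.1⁻¹)) _ p :=
    hA.prodMk hB
  have hFeq : F01 = fun q : ℝ × ℝ => (q.1 * q.2 * (q.1 + q.2)⁻¹, q.2 * q.1⁻¹) := by
    funext q; simp [F01, div_eq_mul_inv]
  rw [hFeq]
  convert hF using 1
  · rfl
  refine ContinuousLinearMap.ext fun v => ?_
  rw [fder_apply]
  refine Prod.ext ?_ ?_ <;>
    simp [ContinuousLinearMap.smulRight, ContinuousLinearMap.fst, ContinuousLinearMap.snd] <;>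
    field_simp <;> ring

/-- The key real-variable density identity. -/
lemma density_id (ρ σ τ : ℝ) (hρ : 0 < ρ) (hσ : 0 < σ) (hτ : 0 < τ)
    (x y : ℝ) (hx : 0 < x) (hy : 0 < y) :
    (τ ^ ρ / Real.Gamma ρ * x ^ (-ρ - 1) * Real.exp (-τ / x)) *
      (τ ^ σ / Real.Gamma σ * y ^ (-σ - 1) * Real.exp (-τ / y)) =
    y / (x * (x + y)) *
      ((τ ^ (ρ + σ) / Real.Gamma (ρ + σ) * (x * y / (x + y)) ^ (-(ρ + σ) - 1) *
          Real.exp (-τ / (x * y / (x + y)))) *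
        ((betaFn ρ σ)⁻¹ * (y / x) ^ (ρ - 1) * (1 + y / x) ^ (-ρ - σ))) := by
  have hxy : (0:ℝ) < x + y := by positivity
  have hL : (0:ℝ) < (τ ^ ρ / Real.Gamma ρ * x ^ (-ρ - 1) * Real.exp (-τ / x)) *
      (τ ^ σ / Real.Gamma σ * y ^ (-σ - 1) * Real.exp (-τ / y)) := by positivity
  have hB : 0 < betaFn ρ σ := by
    have := Real.Gamma_pos_of_pos (show (0:ℝ) < ρ + σ by positivity)
    unfold betaFn; positivity
  have hR : (0:ℝ) < y / (x * (x + y)) *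
      ((τ ^ (ρ + σ) / Real.Gamma (ρ + σ) * (x * y / (x + y)) ^ (-(ρ + σ) - 1) *
          Real.exp (-τ / (x * y / (x + y)))) *
        ((betaFn ρ σ)⁻¹ * (y / x) ^ (ρ - 1) * (1 + y / x) ^ (-ρ - σ))) := by positivity
  have e1w : 1 + y / x = (x + y) / x := by field_simp
  rw [← Real.exp_log hL, ← Real.exp_log hR, e1w]
  congr 1
  have hdiv : -τ / (x * y / (x + y)) = -τ / x + -τ / y := by field_simp; ring
  simp (disch := positivity) only [Real.log_mul, Real.log_div, Real.log_inv, Real.log_exp,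
    Real.log_rpow, betaFn, hdiv]
  ring

lemma prod_withDensity_aux (f g : ℝ → ℝ) (hf : Measurable f) (hg : Measurable g) :
    (volume.withDensity fun x => ENNReal.ofReal (f x)).prod
        (volume.withDensity fun x => ENNReal.ofReal (g x)) =
      (volume : Measure (ℝ × ℝ)).withDensity
        (fun p => ENNReal.ofReal (f p.1) * ENNReal.ofReal (g p.2)) := by
  refine Measure.prod_eq fun s t hs ht => ?_
  rw [withDensity_apply _ (hs.prod ht), withDensity_apply _ hs, withDensity_apply _ ht]
  have : ((volume : Measure (ℝ × ℝ)).restrict (s ×ˢ t))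
      = ((volume : Measure ℝ).restrict s).prod ((volume : Measure ℝ).restrict t) := by
    rw [Measure.volume_eq_prod, Measure.prod_restrict]
  rw [this]
  exact lintegral_prod_mul (hf.ennreal_ofReal.aemeasurable) (hg.ennreal_ofReal.aemeasurable)

lemma meas_igd (l c : ℝ) : Measurable
    (fun x : ℝ => if 0 < x then c ^ l / Real.Gamma l * x ^ (-l - 1) * Real.exp (-c / x) else 0) := by
  refine Measurable.ite (measurableSet_lt measurable_const measurable_id) ?_ measurable_const
  fun_prop

lemma meas_bed (l₁ l₂ : ℝ) : Measurable
    (fun x : ℝ => if 0 < x then (betaFn l₁ l₂)⁻¹ * x ^ (l₁ - 1) * (1 + x) ^ (-l₁ - l₂) else 0) := by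
  refine Measurable.ite (measurableSet_lt measurable_const measurable_id) ?_ measurable_const
  fun_prop

/-- Theorem 4.2(a): the detailed balance condition for `F_{(0,1)}` holds for the
quadruple `(IG(ρ,τ), IG(σ,τ), IG(ρ+σ,τ), Be'(ρ,σ))`. -/
theorem stmt_12 (ρ σ τ : ℝ) (hρ : 0 < ρ) (hσ : 0 < σ) (hτ : 0 < τ) :
    Measure.map F01 ((IG ρ τ).prod (IG σ τ)) = (IG (ρ + σ) τ).prod (BePrime ρ σ) := by
  set gx : ℝ → ℝ := fun x => if 0 < x then τ ^ ρ / Real.Gamma ρ * x ^ (-ρ - 1) *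
      Real.exp (-τ / x) else 0 with hgx
  set gy : ℝ → ℝ := fun x => if 0 < x then τ ^ σ / Real.Gamma σ * x ^ (-σ - 1) *
      Real.exp (-τ / x) else 0 with hgy
  set hs : ℝ → ℝ := fun x => if 0 < x then τ ^ (ρ + σ) / Real.Gamma (ρ + σ) *
      x ^ (-(ρ + σ) - 1) * Real.exp (-τ / x) else 0 with hhs
  set hw : ℝ → ℝ := fun x => if 0 < x then (betaFn ρ σ)⁻¹ * x ^ (ρ - 1) *
      (1 + x) ^ (-ρ - σ) else 0 with hhw
  have hIG1 : IG ρ τ = volume.withDensity fun x => ENNReal.ofReal (gx x) := rfl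
  have hIG2 : IG σ τ = volume.withDensity fun x => ENNReal.ofReal (gy x) := rfl
  have hIG3 : IG (ρ + σ) τ = volume.withDensity fun x => ENNReal.ofReal (hs x) := rfl
  have hBP : BePrime ρ σ = volume.withDensity fun x => ENNReal.ofReal (hw x) := rfl
  rw [hIG1, hIG2, hIG3, hBP,
    prod_withDensity_aux gx gy (meas_igd ρ τ) (meas_igd σ τ),
    prod_withDensity_aux hs hw (meas_igd (ρ + σ) τ) (meas_bed ρ σ)]
  set G : ℝ × ℝ → ENNReal := fun p => ENNReal.ofReal (gx p.1) * ENNReal.ofReal (gy p.2) with hG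
  set H : ℝ × ℝ → ENNReal := fun p => ENNReal.ofReal (hs p.1) * ENNReal.ofReal (hw p.2) with hH
  -- vanishing outside S2
  have hGind : ∀ p, G p = S2.indicator G p := by
    intro p
    rcases Classical.em (p ∈ S2) with h | h
    · rw [Set.indicator_of_mem h]
    · rw [Set.indicator_of_notMem h]
      simp only [S2, Set.mem_prod, Set.mem_Ioi, not_and_or, not_lt] at h
      rcases h with h | h
      · have : gx p.1 = 0 := by simp [hgx, not_lt.2 h]
        simp [hG, this]
      · have : gy p.2 = 0 := by simp [hgy, not_lt.2 h]
        simp [hG, this]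
  have hHind : ∀ p, H p = S2.indicator H p := by
    intro p
    rcases Classical.em (p ∈ S2) with h | h
    · rw [Set.indicator_of_mem h]
    · rw [Set.indicator_of_notMem h]
      simp only [S2, Set.mem_prod, Set.mem_Ioi, not_and_or, not_lt] at h
      rcases h with h | h
      · have : hs p.1 = 0 := by simp [hhs, not_lt.2 h]
        simp [hH, this]
      · have : hw p.2 = 0 := by simp [hhw, not_lt.2 h]
        simp [hH, this]
  refine Measure.ext fun A hA => ?_
  rw [Measure.map_apply F01_measurable hA, withDensity_apply _ (F01_measurable hA),
    withDensity_apply _ hA]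
  -- restrict integrals to S2
  have key1 : ∫⁻ p in F01 ⁻¹' A, G p = ∫⁻ p in S2 ∩ F01 ⁻¹' A, G p := by
    rw [lintegral_congr hGind, lintegral_indicator measurableSet_S2,
      Measure.restrict_restrict measurableSet_S2]
  have key2 : ∫⁻ q in A, H q = ∫⁻ q in S2 ∩ A, H q := by
    rw [lintegral_congr hHind, lintegral_indicator measurableSet_S2,
      Measure.restrict_restrict measurableSet_S2]
  rw [key1, key2]
  set s' : Set (ℝ × ℝ) := S2 ∩ F01 ⁻¹' A with hs'
  have hs'meas : MeasurableSet s' := measurableSet_S2.inter (F01_measurable hA)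
  have himg : F01 '' s' = S2 ∩ A := by
    rw [hs', Set.inter_comm, Set.image_preimage_inter, F01_image, Set.inter_comm]
  have hCOV := lintegral_image_eq_lintegral_abs_det_fderiv_mul volume hs'meas
    (fun p hp => (hasfd p hp.1.1 hp.1.2).hasFDerivWithinAt) (F01_injOn.mono Set.inter_subset_left) H
  rw [himg] at hCOV
  rw [hCOV]
  refine setLIntegral_congr_fun hs'meas (fun p hp => ?_)
  obtain ⟨⟨hx, hy⟩, -⟩ := hp
  simp only [Set.mem_Ioi] at hx hy
  have hxy : (0:ℝ) < p.1 + p.2 := by positivity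
  have hdet : (fder p).det = p.2 / (p.1 * (p.1 + p.2)) := fder_det p hx hy
  have hdetpos : (0:ℝ) < p.2 / (p.1 * (p.1 + p.2)) := by positivity
  have hF1 : (0:ℝ) < p.1 * p.2 / (p.1 + p.2) := by positivity
  have hF2 : (0:ℝ) < p.2 / p.1 := by positivity
  have hBpos : 0 < betaFn ρ σ := by
    have := Real.Gamma_pos_of_pos (show (0:ℝ) < ρ + σ by positivity)
    unfold betaFn; positivity
  have hΓρσ := Real.Gamma_pos_of_pos (show (0:ℝ) < ρ + σ by positivity)
  have hΓρ := Real.Gamma_pos_of_pos hρ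
  have hΓσ := Real.Gamma_pos_of_pos hσ
  rw [hdet, abs_of_pos hdetpos]
  simp only [hG, hH, hgx, hgy, hhs, hhw, F01, if_pos hx, if_pos hy, if_pos hF1, if_pos hF2]
  rw [← ENNReal.ofReal_mul (by positivity), ← ENNReal.ofReal_mul (by positivity),
    ← ENNReal.ofReal_mul (by positivity)]
  exact congrArg ENNReal.ofReal (density_id ρ σ τ hρ hσ hτ p.1 p.2 hx hy)
end

section
/- Let ρ, σ, τ > 0. Then the pushforward of the product measure Be(ρ+σ,τ) ⊗ IB(ρ,σ) under the map F_{(1,−1)}(x,y) = (x(y−1)/(y−x), y/x) equals the product measure Be(σ,τ) ⊗ IB(ρ,σ+τ); that is, the quadruple (μ, ν, μ̃, ν̃) = (Be(ρ+σ,τ), IB(ρ,σ), Be(σ,τ), IB(ρ,σ+τ)) satisfies the detailed balance condition F_{(1,−1)}(μ × ν) = μ̃ × ν̃. -/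
open MeasureTheory

/-- The beta distribution `Be(λ₁,λ₂)`, with density `(1/B(λ₁,λ₂)) x^{λ₁−1} (1−x)^{λ₂−1}`
on `(0,1)`. -/
noncomputable def BeDist (l₁ l₂ : ℝ) : Measure ℝ :=
  volume.withDensity fun x =>
    ENNReal.ofReal
      (if 0 < x ∧ x < 1 then (betaFn l₁ l₂)⁻¹ * x ^ (l₁ - 1) * (1 - x) ^ (l₂ - 1) else 0)

/-- The inverse-beta distribution `IB(λ₁,λ₂)`, with density
`(1/B(λ₁,λ₂)) (x−1)^{λ₂−1} x^{−λ₁−λ₂}` on `(1,∞)`. -/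
noncomputable def IB (l₁ l₂ : ℝ) : Measure ℝ :=
  volume.withDensity fun x =>
    ENNReal.ofReal
      (if 1 < x then (betaFn l₁ l₂)⁻¹ * (x - 1) ^ (l₂ - 1) * x ^ (-l₁ - l₂) else 0)

/-- `F_{(1,−1)}(x,y) = (x(y−1)/(y−x), y/x)`. -/
noncomputable def F1m1 : ℝ × ℝ → ℝ × ℝ := fun p => (p.1 * (p.2 - 1) / (p.2 - p.1), p.2 / p.1)

namespace Stmt13Aux

open ContinuousLinearMap Set
open scoped ENNReal

/-! ### real density functions -/

noncomputable def beDens (l₁ l₂ : ℝ) : ℝ → ℝ := fun x =>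
  if 0 < x ∧ x < 1 then (betaFn l₁ l₂)⁻¹ * x ^ (l₁ - 1) * (1 - x) ^ (l₂ - 1) else 0

noncomputable def ibDens (l₁ l₂ : ℝ) : ℝ → ℝ := fun x =>
  if 1 < x then (betaFn l₁ l₂)⁻¹ * (x - 1) ^ (l₂ - 1) * x ^ (-l₁ - l₂) else 0

lemma betaFn_pos {a b : ℝ} (ha : 0 < a) (hb : 0 < b) : 0 < betaFn a b := by
  unfold betaFn
  have := Real.Gamma_pos_of_pos ha
  have := Real.Gamma_pos_of_pos hb
  have := Real.Gamma_pos_of_pos (add_pos ha hb)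
  positivity

lemma beDens_nonneg {l₁ l₂ : ℝ} (h₁ : 0 < l₁) (h₂ : 0 < l₂) (x : ℝ) : 0 ≤ beDens l₁ l₂ x := by
  unfold beDens
  split_ifs with h
  · have hb := betaFn_pos h₁ h₂
    have hx := h.1
    have hx1 : (0:ℝ) < 1 - x := by linarith [h.2]
    positivity
  · exact le_rfl

lemma ibDens_nonneg {l₁ l₂ : ℝ} (h₁ : 0 < l₁) (h₂ : 0 < l₂) (x : ℝ) : 0 ≤ ibDens l₁ l₂ x := by
  unfold ibDens
  split_ifs with h
  · have hb := betaFn_pos h₁ h₂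
    have hx : (0:ℝ) < x - 1 := by linarith
    have hx0 : (0:ℝ) < x := by linarith
    positivity
  · exact le_rfl

lemma measurable_beDens (l₁ l₂ : ℝ) : Measurable (beDens l₁ l₂) := by
  unfold beDens
  have : MeasurableSet {x : ℝ | 0 < x ∧ x < 1} := by
    have : {x : ℝ | 0 < x ∧ x < 1} = Set.Ioo 0 1 := by ext x; simp [Set.mem_Ioo]
    rw [this]; exact measurableSet_Ioo
  exact Measurable.ite this (by fun_prop) measurable_const

lemma measurable_ibDens (l₁ l₂ : ℝ) : Measurable (ibDens l₁ l₂) := by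
  unfold ibDens
  exact Measurable.ite measurableSet_Ioi (by fun_prop) measurable_const

/-! ### derivative of F1m1 -/

noncomputable def Fd (p : ℝ × ℝ) : ℝ × ℝ →L[ℝ] ℝ × ℝ :=
  ((p.1 * (p.2 - 1)) • ((smulRight (1 : ℝ →L[ℝ] ℝ) (-((p.2 - p.1) ^ 2)⁻¹)).comp
        (snd ℝ ℝ ℝ - fst ℝ ℝ ℝ))
      + (p.2 - p.1)⁻¹ • (p.1 • (snd ℝ ℝ ℝ) + (p.2 - 1) • (fst ℝ ℝ ℝ))).prod
    (p.2 • ((smulRight (1 : ℝ →L[ℝ] ℝ) (-(p.1 ^ 2)⁻¹)).comp (fst ℝ ℝ ℝ))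
      + (p.1)⁻¹ • (snd ℝ ℝ ℝ))

lemma hasFDeriv_F1m1 (p : ℝ × ℝ) (h1 : p.1 ≠ 0) (h2 : p.2 - p.1 ≠ 0) :
    HasFDerivAt F1m1 (Fd p) p := by
  have hA : HasFDerivAt (fun q : ℝ × ℝ => q.1 * (q.2 - 1))
      (p.1 • (snd ℝ ℝ ℝ) + (p.2 - 1) • (fst ℝ ℝ ℝ)) p :=
    hasFDerivAt_fst.mul (hasFDerivAt_snd.sub_const 1)
  have hB : HasFDerivAt (fun q : ℝ × ℝ => q.2 - q.1) (snd ℝ ℝ ℝ - fst ℝ ℝ ℝ) p :=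
    hasFDerivAt_snd.sub hasFDerivAt_fst
  have hBinv := (hasFDerivAt_inv h2).comp p hB
  have hu := hA.mul hBinv
  have hCinv := (hasFDerivAt_inv h1).comp p hasFDerivAt_fst
  have hv := hasFDerivAt_snd.mul hCinv
  have h := hu.prodMk hv
  unfold F1m1
  simpa [F1m1, Fd, div_eq_mul_inv, Function.comp, smulRight_one_eq_toSpanSingleton] using h

lemma det_prod_formula (L : ℝ × ℝ →L[ℝ] ℝ × ℝ) :
    L.det = (L (1,0)).1 * (L (0,1)).2 - (L (0,1)).1 * (L (1,0)).2 := by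
  have : L.det = (L : (ℝ × ℝ) →ₗ[ℝ] ℝ × ℝ).det := rfl
  rw [this, ← LinearMap.det_toMatrix (Module.Basis.finTwoProd ℝ), Matrix.det_fin_two]
  simp [LinearMap.toMatrix_apply, Module.Basis.finTwoProd_zero, Module.Basis.finTwoProd_one,
    Module.Basis.coe_finTwoProd_repr]

lemma det_Fd {p : ℝ × ℝ} (h1 : 0 < p.1) (h2 : p.1 < p.2) :
    (Fd p).det = p.2 / (p.1 * (p.2 - p.1)) := by
  have hd : p.2 - p.1 ≠ 0 := by nlinarith
  have h1' : p.1 ≠ 0 := ne_of_gt h1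
  rw [det_prod_formula]
  simp only [Fd, prod_apply, ContinuousLinearMap.add_apply, ContinuousLinearMap.smul_apply,
    ContinuousLinearMap.comp_apply, smulRight_apply, ContinuousLinearMap.sub_apply,
    coe_fst', coe_snd', ContinuousLinearMap.one_apply, ContinuousLinearMap.coe_smul', Pi.smul_apply]
  simp only [toSpanSingleton_apply, smul_eq_mul, Prod.smul_mk, Prod.fst_add, Prod.snd_add, mul_one, mul_zero, add_zero, zero_add]
  field_simp
  ring

/-! ### the domain and bijectivity -/

def S : Set (ℝ × ℝ) := Set.Ioo (0:ℝ) 1 ×ˢ Set.Ioi (1:ℝ)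

lemma measurableSet_S : MeasurableSet S := measurableSet_Ioo.prod measurableSet_Ioi

lemma mem_S_iff {p : ℝ × ℝ} : p ∈ S ↔ (0 < p.1 ∧ p.1 < 1) ∧ 1 < p.2 := by
  simp [S, Set.mem_prod, Set.mem_Ioo, Set.mem_Ioi, and_assoc]

lemma mapsTo_S {p : ℝ × ℝ} (hp : p ∈ S) : F1m1 p ∈ S := by
  obtain ⟨⟨hx0, hx1⟩, hy⟩ := mem_S_iff.mp hp
  have hd : 0 < p.2 - p.1 := by linarith
  rw [mem_S_iff]
  simp only [F1m1]
  refine ⟨⟨?_, ?_⟩, ?_⟩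
  · have : 0 < p.1 * (p.2 - 1) := by nlinarith
    exact div_pos this hd
  · rw [div_lt_one hd]; nlinarith
  · rw [lt_div_iff₀ hx0]; nlinarith

noncomputable def Ginv : ℝ × ℝ → ℝ × ℝ :=
  fun q => ((q.1 * (q.2 - 1) + 1) / q.2, q.1 * (q.2 - 1) + 1)

lemma left_inv_S {p : ℝ × ℝ} (hp : p ∈ S) : Ginv (F1m1 p) = p := by
  obtain ⟨⟨hx0, hx1⟩, hy⟩ := mem_S_iff.mp hp
  have hd : p.2 - p.1 ≠ 0 := by nlinarith
  have hx : p.1 ≠ 0 := ne_of_gt hx0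
  have hy0 : p.2 ≠ 0 := by nlinarith
  simp only [Ginv, F1m1]
  have h2 : p.1 * (p.2 - 1) / (p.2 - p.1) * (p.2 / p.1 - 1) + 1 = p.2 := by
    field_simp
    ring
  rw [h2]
  have h1 : p.2 / (p.2 / p.1) = p.1 := by field_simp
  exact Prod.ext h1 rfl

lemma right_inv_S {q : ℝ × ℝ} (hq : q ∈ S) : Ginv q ∈ S ∧ F1m1 (Ginv q) = q := by
  obtain ⟨⟨hu0, hu1⟩, hv⟩ := mem_S_iff.mp hq
  set u := q.1; set v := q.2
  have hv0 : (0:ℝ) < v := by linarith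
  have hy1 : 1 < u * (v - 1) + 1 := by nlinarith
  have hy0 : (0:ℝ) < u * (v - 1) + 1 := by linarith
  have hxlt : (u * (v - 1) + 1) / v < 1 := by
    rw [div_lt_one hv0]; nlinarith
  have hmem : Ginv q ∈ S := by
    rw [mem_S_iff]
    exact ⟨⟨div_pos hy0 hv0, hxlt⟩, hy1⟩
  refine ⟨hmem, ?_⟩
  simp only [Ginv, F1m1]
  have hylt : (u * (v - 1) + 1) / v < u * (v - 1) + 1 := by
    calc (u * (v - 1) + 1) / v < 1 := hxlt
    _ < u * (v - 1) + 1 := hy1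
  have hdne : u * (v - 1) + 1 - (u * (v - 1) + 1) / v ≠ 0 := by nlinarith
  have hvne : v ≠ 0 := ne_of_gt hv0
  have hxne : (u * (v - 1) + 1) / v ≠ 0 := ne_of_gt (div_pos hy0 hv0)
  refine Prod.ext ?_ ?_
  · show (u * (v - 1) + 1) / v * (u * (v - 1) + 1 - 1) /
        (u * (v - 1) + 1 - (u * (v - 1) + 1) / v) = u
    rw [div_eq_iff hdne]
    field_simp
    ring
  · show (u * (v - 1) + 1) / ((u * (v - 1) + 1) / v) = v
    rw [div_div_eq_mul_div, mul_comm, mul_div_assoc, div_self (ne_of_gt hy0), mul_one]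

lemma injOn_S : Set.InjOn F1m1 S := fun a ha b hb h => by
  rw [← left_inv_S ha, ← left_inv_S hb, h]

lemma image_S : F1m1 '' S = S := by
  apply subset_antisymm
  · rintro _ ⟨p, hp, rfl⟩; exact mapsTo_S hp
  · intro q hq
    exact ⟨Ginv q, (right_inv_S hq).1, (right_inv_S hq).2⟩

lemma measurable_F1m1 : Measurable F1m1 := by
  unfold F1m1; fun_prop

/-! ### rpow helpers -/

lemma rpow_sub_one' {x : ℝ} (hx : 0 < x) (a : ℝ) : x ^ (a - 1) = x ^ a / x := by
  rw [show a - 1 = a + (-1) by ring, Real.rpow_add hx, Real.rpow_neg_one, div_eq_mul_inv]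

lemma rpow_add_sub_one {x : ℝ} (hx : 0 < x) (a b : ℝ) :
    x ^ (a + b - 1) = x ^ a * x ^ b / x := by
  rw [show a + b - 1 = a + (b + (-1)) by ring, Real.rpow_add hx, Real.rpow_add hx,
    Real.rpow_neg_one]
  ring

lemma rpow_neg_add2 {x : ℝ} (hx : 0 < x) (a b : ℝ) : x ^ (-a - b) = (x ^ a * x ^ b)⁻¹ := by
  rw [show -a - b = -(a + b) by ring, Real.rpow_neg hx.le, Real.rpow_add hx]

lemma rpow_neg_add3 {x : ℝ} (hx : 0 < x) (a b c : ℝ) :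
    x ^ (-a - (b + c)) = (x ^ a * (x ^ b * x ^ c))⁻¹ := by
  rw [show -a - (b + c) = -(a + (b + c)) by ring, Real.rpow_neg hx.le, Real.rpow_add hx,
    Real.rpow_add hx]

/-! ### the key density identity -/

lemma key_real {ρ σ τ x y : ℝ} (hρ : 0 < ρ) (hσ : 0 < σ) (hτ : 0 < τ)
    (hx0 : 0 < x) (hx1 : x < 1) (hy : 1 < y) :
    beDens (ρ + σ) τ x * ibDens ρ σ y
      = y / (x * (y - x)) *
        (beDens σ τ (x * (y - 1) / (y - x)) * ibDens ρ (σ + τ) (y / x)) := by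
  have hd : 0 < y - x := by linarith
  have hy0 : (0:ℝ) < y := by linarith
  have hy1 : (0:ℝ) < y - 1 := by linarith
  have h1x : (0:ℝ) < 1 - x := by linarith
  have hu0 : 0 < x * (y - 1) / (y - x) := by positivity
  have hu1 : x * (y - 1) / (y - x) < 1 := by rw [div_lt_one hd]; nlinarith
  have hv : 1 < y / x := by rw [lt_div_iff₀ hx0]; nlinarith
  unfold beDens ibDens
  rw [if_pos ⟨hx0, hx1⟩, if_pos hy, if_pos ⟨hu0, hu1⟩, if_pos hv]
  have h1u : 1 - x * (y - 1) / (y - x) = y * (1 - x) / (y - x) := by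
    field_simp
    ring
  have hv1 : y / x - 1 = (y - x) / x := by
    field_simp
  rw [h1u, hv1]
  rw [Real.div_rpow (by positivity) hd.le, Real.mul_rpow hx0.le hy1.le,
    Real.div_rpow (by positivity) hd.le, Real.mul_rpow hy0.le h1x.le,
    Real.div_rpow hd.le hx0.le, Real.div_rpow hy0.le hx0.le]
  rw [rpow_add_sub_one hx0 ρ σ, rpow_add_sub_one hd σ τ, rpow_add_sub_one hx0 σ τ,
    rpow_neg_add3 hy0 ρ σ τ, rpow_neg_add3 hx0 ρ σ τ, rpow_neg_add2 hy0 ρ σ,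
    rpow_sub_one' h1x τ, rpow_sub_one' hy1 σ, rpow_sub_one' hx0 σ,
    rpow_sub_one' hd σ, rpow_sub_one' hy0 τ, rpow_sub_one' hd τ]
  unfold betaFn
  have hG : Real.Gamma (ρ + (σ + τ)) = Real.Gamma (ρ + σ + τ) := by rw [← add_assoc]
  rw [hG]
  have g1 := Real.Gamma_pos_of_pos hρ
  have g2 := Real.Gamma_pos_of_pos hσ
  have g3 := Real.Gamma_pos_of_pos hτ
  have g12 := Real.Gamma_pos_of_pos (add_pos hρ hσ)
  have g23 := Real.Gamma_pos_of_pos (add_pos hσ hτ)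
  have g123 := Real.Gamma_pos_of_pos (add_pos (add_pos hρ hσ) hτ)
  have p1 := Real.rpow_pos_of_pos hx0 ρ
  have p2 := Real.rpow_pos_of_pos hx0 σ
  have p3 := Real.rpow_pos_of_pos hx0 τ
  have p4 := Real.rpow_pos_of_pos hy0 ρ
  have p5 := Real.rpow_pos_of_pos hy0 σ
  have p6 := Real.rpow_pos_of_pos hy0 τ
  have p7 := Real.rpow_pos_of_pos hd σ
  have p8 := Real.rpow_pos_of_pos hd τ
  have p9 := Real.rpow_pos_of_pos h1x τ
  have p10 := Real.rpow_pos_of_pos hy1 σ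
  field_simp

/-! ### measure plumbing -/

lemma prod_withDensity (f g : ℝ → ℝ≥0∞) (hf : Measurable f) (hg : Measurable g)
    (hf' : ∀ x, f x ≠ ⊤) (hg' : ∀ x, g x ≠ ⊤) :
    (volume.withDensity f).prod (volume.withDensity g)
      = (volume : Measure (ℝ × ℝ)).withDensity (fun p => f p.1 * g p.2) := by
  haveI := SigmaFinite.withDensity_of_ne_top' (μ := (volume : Measure ℝ)) hf'
  haveI := SigmaFinite.withDensity_of_ne_top' (μ := (volume : Measure ℝ)) hg'
  refine Measure.prod_eq fun s t hs ht => ?_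
  rw [withDensity_apply _ (hs.prod ht), Measure.volume_eq_prod, ← Measure.prod_restrict,
    lintegral_prod_mul hf.aemeasurable hg.aemeasurable,
    withDensity_apply _ hs, withDensity_apply _ ht]

lemma indicator_src (a b c d : ℝ) :
    (fun p : ℝ × ℝ => ENNReal.ofReal (beDens a b p.1) * ENNReal.ofReal (ibDens c d p.2))
      = S.indicator
        (fun p : ℝ × ℝ => ENNReal.ofReal (beDens a b p.1) * ENNReal.ofReal (ibDens c d p.2)) := by
  funext p
  by_cases hp : p ∈ S
  · rw [Set.indicator_of_mem hp]
  · rw [Set.indicator_of_notMem hp]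
    rw [mem_S_iff, not_and_or] at hp
    rcases hp with h | h
    · have : beDens a b p.1 = 0 := if_neg h
      simp [this]
    · have : ibDens c d p.2 = 0 := if_neg h
      simp [this]

lemma key_ofReal {ρ σ τ : ℝ} (hρ : 0 < ρ) (hσ : 0 < σ) (hτ : 0 < τ)
    {p : ℝ × ℝ} (hp : p ∈ S) :
    ENNReal.ofReal (beDens (ρ + σ) τ p.1) * ENNReal.ofReal (ibDens ρ σ p.2)
      = ENNReal.ofReal |(Fd p).det| *
        (ENNReal.ofReal (beDens σ τ (F1m1 p).1) * ENNReal.ofReal (ibDens ρ (σ + τ) (F1m1 p).2)) := by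
  obtain ⟨⟨hx0, hx1⟩, hy⟩ := mem_S_iff.mp hp
  have hd : 0 < p.2 - p.1 := by linarith
  have hdet : (Fd p).det = p.2 / (p.1 * (p.2 - p.1)) := det_Fd hx0 (by linarith)
  have hdetpos : 0 < p.2 / (p.1 * (p.2 - p.1)) := by positivity
  rw [hdet, abs_of_pos hdetpos]
  rw [← ENNReal.ofReal_mul (beDens_nonneg (add_pos hρ hσ) hτ _),
    ← ENNReal.ofReal_mul (beDens_nonneg hσ hτ _),
    ← ENNReal.ofReal_mul (by positivity)]
  refine congrArg ENNReal.ofReal ?_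
  have h1 : (F1m1 p).1 = p.1 * (p.2 - 1) / (p.2 - p.1) := rfl
  have h2 : (F1m1 p).2 = p.2 / p.1 := rfl
  rw [h1, h2]
  exact key_real hρ hσ hτ hx0 hx1 hy

end Stmt13Aux

/-- Theorem 4.2(d): the detailed balance condition for `F_{(1,−1)}` holds for the
quadruple `(Be(ρ+σ,τ), IB(ρ,σ), Be(σ,τ), IB(ρ,σ+τ))`. -/
theorem stmt_13 (ρ σ τ : ℝ) (hρ : 0 < ρ) (hσ : 0 < σ) (hτ : 0 < τ) :
    Measure.map F1m1 ((BeDist (ρ + σ) τ).prod (IB ρ σ))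
      = (BeDist σ τ).prod (IB ρ (σ + τ)) := by
  classical
  have hbe1 : BeDist (ρ + σ) τ
      = volume.withDensity (fun x => ENNReal.ofReal (Stmt13Aux.beDens (ρ + σ) τ x)) := rfl
  have hib1 : IB ρ σ = volume.withDensity (fun x => ENNReal.ofReal (Stmt13Aux.ibDens ρ σ x)) := rfl
  have hbe2 : BeDist σ τ = volume.withDensity (fun x => ENNReal.ofReal (Stmt13Aux.beDens σ τ x)) := rfl
  have hib2 : IB ρ (σ + τ)
      = volume.withDensity (fun x => ENNReal.ofReal (Stmt13Aux.ibDens ρ (σ + τ) x)) := rfl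
  rw [hbe1, hib1, hbe2, hib2,
    Stmt13Aux.prod_withDensity _ _ ((Stmt13Aux.measurable_beDens _ _).ennreal_ofReal)
      ((Stmt13Aux.measurable_ibDens _ _).ennreal_ofReal)
      (fun x => ENNReal.ofReal_ne_top) (fun x => ENNReal.ofReal_ne_top),
    Stmt13Aux.prod_withDensity _ _ ((Stmt13Aux.measurable_beDens _ _).ennreal_ofReal)
      ((Stmt13Aux.measurable_ibDens _ _).ennreal_ofReal)
      (fun x => ENNReal.ofReal_ne_top) (fun x => ENNReal.ofReal_ne_top),
    Stmt13Aux.indicator_src (ρ + σ) τ ρ σ, Stmt13Aux.indicator_src σ τ ρ (σ + τ),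
    withDensity_indicator Stmt13Aux.measurableSet_S,
    withDensity_indicator Stmt13Aux.measurableSet_S]
  -- change of variables
  haveI : (volume : Measure (ℝ × ℝ)).IsAddHaarMeasure := by
    rw [Measure.volume_eq_prod]; infer_instance
  have hfd : ∀ p ∈ Stmt13Aux.S, HasFDerivWithinAt F1m1 (Stmt13Aux.Fd p) Stmt13Aux.S p := by
    intro p hp
    obtain ⟨⟨hx0, hx1⟩, hy⟩ := Stmt13Aux.mem_S_iff.mp hp
    exact (Stmt13Aux.hasFDeriv_F1m1 p (ne_of_gt hx0) (by nlinarith)).hasFDerivWithinAt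
  have hL : ∀ (A : Set (ℝ × ℝ)), MeasurableSet A → ∀ (D : ℝ × ℝ → ENNReal),
      ∫⁻ p in A, D p ∂(volume.restrict Stmt13Aux.S) = ∫⁻ p in Stmt13Aux.S, A.indicator D p := by
    intro A hA D
    exact (lintegral_indicator hA D).symm
  apply Measure.ext; intro t ht
  rw [Measure.map_apply Stmt13Aux.measurable_F1m1 ht,
    withDensity_apply _ (Stmt13Aux.measurable_F1m1 ht), withDensity_apply _ ht,
    hL _ (Stmt13Aux.measurable_F1m1 ht) _, hL _ ht _]
  conv_rhs => rw [← Stmt13Aux.image_S]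
  rw [lintegral_image_eq_lintegral_abs_det_fderiv_mul volume Stmt13Aux.measurableSet_S hfd
    Stmt13Aux.injOn_S]
  refine setLIntegral_congr_fun Stmt13Aux.measurableSet_S (fun p hp => ?_)
  by_cases hFt : F1m1 p ∈ t
  · rw [Set.indicator_of_mem (show p ∈ F1m1 ⁻¹' t from hFt),
      Set.indicator_of_mem hFt]
    exact Stmt13Aux.key_ofReal hρ hσ hτ hp
  · rw [Set.indicator_of_notMem (show p ∉ F1m1 ⁻¹' t from hFt),
      Set.indicator_of_notMem hFt, mul_zero]
end

section
/- Let ρ, σ > 0 and τ ∈ ℝ. Then the pushforward of the product measure sExp(ρ,τ) ⊗ sExp(σ,τ) under the map F_{E,AL}(x,y) = (min(x,y), x−y) equals the product measure sExp(ρ+σ,τ) ⊗ AL(ρ,σ). In particular, if X ~ sExp(ρ,τ) and Y ~ sExp(σ,τ) are independent, then min(X,Y) and X−Y are independent with min(X,Y) ~ sExp(ρ+σ,τ) and X−Y ~ AL(ρ,σ). -/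
open MeasureTheory

/-- The shifted exponential distribution `sExp(λ,c)`, with density `λ e^{−λ(x−c)}`
on `[c,∞)`. -/
noncomputable def sExp (l c : ℝ) : Measure ℝ :=
  volume.withDensity fun x =>
    ENNReal.ofReal (if c ≤ x then l * Real.exp (-l * (x - c)) else 0)

/-- The asymmetric Laplace distribution `AL(λ₁,λ₂)`, with density
`(λ₁λ₂/(λ₁+λ₂)) e^{−λ₁x}` for `x > 0` and `(λ₁λ₂/(λ₁+λ₂)) e^{λ₂x}` for `x ≤ 0`. -/
noncomputable def AL (l₁ l₂ : ℝ) : Measure ℝ :=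
  volume.withDensity fun x =>
    ENNReal.ofReal
      (if 0 < x then l₁ * l₂ / (l₁ + l₂) * Real.exp (-l₁ * x)
        else l₁ * l₂ / (l₁ + l₂) * Real.exp (l₂ * x))

namespace StmtAux

open Set

/-- Density of `sExp l c`. -/
noncomputable def sDens (l c : ℝ) : ℝ → ENNReal := fun x =>
  ENNReal.ofReal (if c ≤ x then l * Real.exp (-l * (x - c)) else 0)

/-- Density of `AL l₁ l₂`. -/
noncomputable def aDens (l₁ l₂ : ℝ) : ℝ → ENNReal := fun x =>
  ENNReal.ofReal
    (if 0 < x then l₁ * l₂ / (l₁ + l₂) * Real.exp (-l₁ * x)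
      else l₁ * l₂ / (l₁ + l₂) * Real.exp (l₂ * x))

lemma sExp_eq (l c : ℝ) : sExp l c = volume.withDensity (sDens l c) := rfl
lemma AL_eq (l₁ l₂ : ℝ) : AL l₁ l₂ = volume.withDensity (aDens l₁ l₂) := rfl

lemma meas_sDens (l c : ℝ) : Measurable (sDens l c) := by
  refine Measurable.ennreal_ofReal ?_
  refine Measurable.ite (measurableSet_le measurable_const measurable_id) ?_ measurable_const
  exact measurable_const.mul (((measurable_id.sub measurable_const).const_mul (-l)).exp)

lemma meas_aDens (l₁ l₂ : ℝ) : Measurable (aDens l₁ l₂) := by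
  refine Measurable.ennreal_ofReal ?_
  refine Measurable.ite (measurableSet_lt measurable_const measurable_id) ?_ ?_
  · exact measurable_const.mul ((measurable_id.const_mul (-l₁)).exp)
  · exact measurable_const.mul ((measurable_id.const_mul l₂).exp)

lemma lint_exp_Ici {r : ℝ} (hr : 0 < r) :
    ∫⁻ x in Ici (0:ℝ), ENNReal.ofReal (r * Real.exp (-(r * x))) = 1 := by
  have h1 := ProbabilityTheory.lintegral_exponentialPDF_eq_one hr
  rw [← lintegral_add_compl (ProbabilityTheory.exponentialPDF r)
    (measurableSet_Iio (a := (0:ℝ))),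
    ProbabilityTheory.lintegral_exponentialPDF_of_nonpos le_rfl, zero_add, compl_Iio] at h1
  rw [← h1]
  refine setLIntegral_congr_fun measurableSet_Ici (fun x hx => ?_)
  rw [ProbabilityTheory.exponentialPDF_of_nonneg hx]

lemma lint_exp_Ioi {r : ℝ} (hr : 0 < r) :
    ∫⁻ x in Ioi (0:ℝ), ENNReal.ofReal (r * Real.exp (-(r * x))) = 1 := by
  rw [setLIntegral_congr Ioi_ae_eq_Ici]
  exact lint_exp_Ici hr

lemma sExp_prob {l : ℝ} (hl : 0 < l) (c : ℝ) : IsProbabilityMeasure (sExp l c) := by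
  constructor
  rw [sExp, withDensity_apply _ MeasurableSet.univ, Measure.restrict_univ]
  have hshift := lintegral_add_right_eq_self (μ := (volume : Measure ℝ))
    (fun x => ENNReal.ofReal (if c ≤ x then l * Real.exp (-l * (x - c)) else 0)) c
  rw [← hshift]
  have heq : ∀ x : ℝ,
      ENNReal.ofReal (if c ≤ x + c then l * Real.exp (-l * (x + c - c)) else 0)
        = ENNReal.ofReal (if 0 ≤ x then l * Real.exp (-(l * x)) else 0) := by
    intro x
    have : c ≤ x + c ↔ 0 ≤ x := le_add_iff_nonneg_left c
    simp only [add_sub_cancel_right, this, neg_mul]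
  simp only [heq]
  rw [← lintegral_add_compl (fun x => ENNReal.ofReal (if 0 ≤ x then l * Real.exp (-(l * x)) else 0))
    (measurableSet_Ici (a := (0:ℝ))), compl_Ici]
  have h2 : ∫⁻ x in Iio (0:ℝ),
      ENNReal.ofReal (if 0 ≤ x then l * Real.exp (-(l * x)) else 0) = 0 := by
    rw [setLIntegral_congr_fun measurableSet_Iio
      (fun x (hx : x < 0) => by rw [if_neg (not_le.2 hx)])]
    simp
  have h1 : ∫⁻ x in Ici (0:ℝ),
      ENNReal.ofReal (if 0 ≤ x then l * Real.exp (-(l * x)) else 0) = 1 := by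
    rw [setLIntegral_congr_fun measurableSet_Ici
      (fun x (hx : 0 ≤ x) => by rw [if_pos hx])]
    exact lint_exp_Ici hl
  rw [h1, h2, add_zero]

lemma AL_prob {l₁ l₂ : ℝ} (h₁ : 0 < l₁) (h₂ : 0 < l₂) : IsProbabilityMeasure (AL l₁ l₂) := by
  have hs : (0:ℝ) < l₁ + l₂ := by linarith
  constructor
  rw [AL, withDensity_apply _ MeasurableSet.univ, Measure.restrict_univ,
    ← lintegral_add_compl _ (measurableSet_Ioi (a := (0:ℝ))), compl_Ioi]
  have hIoi : ∫⁻ x in Ioi (0:ℝ), ENNReal.ofReal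
      (if 0 < x then l₁ * l₂ / (l₁ + l₂) * Real.exp (-l₁ * x)
        else l₁ * l₂ / (l₁ + l₂) * Real.exp (l₂ * x)) = ENNReal.ofReal (l₂ / (l₁ + l₂)) := by
    have hcong : ∀ x ∈ Ioi (0:ℝ), ENNReal.ofReal
        (if 0 < x then l₁ * l₂ / (l₁ + l₂) * Real.exp (-l₁ * x)
          else l₁ * l₂ / (l₁ + l₂) * Real.exp (l₂ * x))
        = ENNReal.ofReal (l₂ / (l₁ + l₂)) * ENNReal.ofReal (l₁ * Real.exp (-(l₁ * x))) := by
      intro x hx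
      rw [if_pos (mem_Ioi.1 hx), ← ENNReal.ofReal_mul (by positivity)]
      congr 1
      rw [neg_mul]; ring
    rw [setLIntegral_congr_fun measurableSet_Ioi hcong,
      lintegral_const_mul' _ _ ENNReal.ofReal_ne_top, lint_exp_Ioi h₁, mul_one]
  have hIic : ∫⁻ x in Iic (0:ℝ), ENNReal.ofReal
      (if 0 < x then l₁ * l₂ / (l₁ + l₂) * Real.exp (-l₁ * x)
        else l₁ * l₂ / (l₁ + l₂) * Real.exp (l₂ * x)) = ENNReal.ofReal (l₁ / (l₁ + l₂)) := by
    have hmapneg : Measure.map Neg.neg (volume : Measure ℝ) = volume :=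
      Measure.map_neg_eq_self (volume : Measure ℝ)
    have hmeas : Measurable fun x : ℝ => ENNReal.ofReal
        (if 0 < x then l₁ * l₂ / (l₁ + l₂) * Real.exp (-l₁ * x)
          else l₁ * l₂ / (l₁ + l₂) * Real.exp (l₂ * x)) := meas_aDens l₁ l₂
    rw [← hmapneg, setLIntegral_map measurableSet_Iic hmeas measurable_neg]
    have hpre : (Neg.neg : ℝ → ℝ) ⁻¹' Iic 0 = Ici 0 := by
      ext x; simp
    rw [hpre]
    have hcong : ∀ x ∈ Ici (0:ℝ), ENNReal.ofReal
        (if 0 < -x then l₁ * l₂ / (l₁ + l₂) * Real.exp (-l₁ * -x)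
          else l₁ * l₂ / (l₁ + l₂) * Real.exp (l₂ * -x))
        = ENNReal.ofReal (l₁ / (l₁ + l₂)) * ENNReal.ofReal (l₂ * Real.exp (-(l₂ * x))) := by
      intro x hx
      rw [if_neg (by simp [mem_Ici.1 hx] : ¬ (0:ℝ) < -x), ← ENNReal.ofReal_mul (by positivity)]
      congr 1
      rw [mul_neg, ← neg_mul]; ring
    rw [setLIntegral_congr_fun measurableSet_Ici hcong,
      lintegral_const_mul' _ _ ENNReal.ofReal_ne_top, lint_exp_Ici h₂, mul_one]
  rw [hIoi, hIic, ← ENNReal.ofReal_add (by positivity) (by positivity),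
    ← add_div, add_comm l₂ l₁, div_self hs.ne', ENNReal.ofReal_one]

lemma measurable_FEAL : Measurable FEAL :=
  (measurable_fst.min measurable_snd).prodMk (measurable_fst.sub measurable_snd)

noncomputable def eFE : (ℝ × ℝ) ≃ᵐ (ℝ × ℝ) where
  toFun := FEAL
  invFun := fun q => (q.1 + max q.2 0, q.1 - min q.2 0)
  left_inv := by
    intro p
    rcases le_total p.1 p.2 with h | h
    · have h1 : min p.1 p.2 = p.1 := min_eq_left h
      have h2 : max (p.1 - p.2) 0 = 0 := max_eq_right (sub_nonpos.2 h)
      have h3 : min (p.1 - p.2) 0 = p.1 - p.2 := min_eq_left (sub_nonpos.2 h)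
      simp only [FEAL, h1, h2, h3, add_zero, sub_sub_cancel]
    · have h1 : min p.1 p.2 = p.2 := min_eq_right h
      have h2 : max (p.1 - p.2) 0 = p.1 - p.2 := max_eq_left (sub_nonneg.2 h)
      have h3 : min (p.1 - p.2) 0 = 0 := min_eq_right (sub_nonneg.2 h)
      simp only [FEAL, h1, h2, h3, sub_zero]
      ext <;> simp
  right_inv := by
    intro q
    rcases le_total q.2 0 with h | h
    · have h2 : max q.2 0 = 0 := max_eq_right h
      have h3 : min q.2 0 = q.2 := min_eq_left h
      simp only [FEAL, h2, h3, add_zero, sub_sub_cancel]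
      have : min q.1 (q.1 - q.2) = q.1 := min_eq_left (by linarith)
      rw [this]
    · have h2 : max q.2 0 = q.2 := max_eq_left h
      have h3 : min q.2 0 = 0 := min_eq_right h
      simp only [FEAL, h2, h3, sub_zero, add_sub_cancel_left]
      have : min (q.1 + q.2) q.1 = q.1 := min_eq_right (by linarith)
      rw [this]
  measurable_toFun := measurable_FEAL
  measurable_invFun := by
    exact ((measurable_fst.add (measurable_snd.max measurable_const)).prodMk
      (measurable_fst.sub (measurable_snd.min measurable_const)))

lemma map_FEAL_volume :
    Measure.map FEAL ((volume : Measure ℝ).prod volume) = (volume : Measure ℝ).prod volume := by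
  set v : Measure (ℝ × ℝ) := (volume : Measure ℝ).prod volume with hv
  have hL1 : MeasurePreserving (fun p : ℝ × ℝ => (p.1, p.1 - p.2)) v v := by
    have h1 := measurePreserving_prod_sub (volume : Measure ℝ) volume
    have h2 : MeasurePreserving (Prod.map (id : ℝ → ℝ) (Neg.neg : ℝ → ℝ)) v v :=
      (MeasurePreserving.id volume).prod (Measure.measurePreserving_neg volume)
    have h3 := h2.comp h1
    have : (Prod.map (id : ℝ → ℝ) (Neg.neg : ℝ → ℝ)) ∘ (fun z : ℝ × ℝ => (z.1, z.2 - z.1))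
        = fun p : ℝ × ℝ => (p.1, p.1 - p.2) := by
      funext p; simp [Prod.map, neg_sub]
    rwa [this] at h3
  have hL2 : MeasurePreserving (fun p : ℝ × ℝ => (p.2, p.1 - p.2)) v v :=
    measurePreserving_prod_sub_swap volume volume
  set s : Set (ℝ × ℝ) := {p | p.1 ≤ p.2} with hsdef
  have hs : MeasurableSet s := measurableSet_le measurable_fst measurable_snd
  have hT : MeasurableSet {q : ℝ × ℝ | q.2 ≤ (0:ℝ)} :=
    measurableSet_le measurable_snd measurable_const
  have e1 : s = (fun p : ℝ × ℝ => (p.1, p.1 - p.2)) ⁻¹' {q : ℝ × ℝ | q.2 ≤ (0:ℝ)} := by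
    ext p; simp [hsdef, sub_nonpos]
  have e2 : sᶜ = (fun p : ℝ × ℝ => (p.2, p.1 - p.2)) ⁻¹' {q : ℝ × ℝ | q.2 ≤ (0:ℝ)}ᶜ := by
    ext p; simp [hsdef, sub_nonpos]
  calc Measure.map FEAL v
      = Measure.map FEAL (v.restrict s + v.restrict sᶜ) := by
        rw [Measure.restrict_add_restrict_compl hs]
    _ = Measure.map FEAL (v.restrict s) + Measure.map FEAL (v.restrict sᶜ) :=
        Measure.map_add _ _ measurable_FEAL
    _ = Measure.map (fun p : ℝ × ℝ => (p.1, p.1 - p.2)) (v.restrict s)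
        + Measure.map (fun p : ℝ × ℝ => (p.2, p.1 - p.2)) (v.restrict sᶜ) := by
        congr 1
        · refine Measure.map_congr ((ae_restrict_iff' hs).2 (ae_of_all _ fun p hp => ?_))
          have hle : p.1 ≤ p.2 := hp
          simp only [FEAL, min_eq_left hle]
        · refine Measure.map_congr ((ae_restrict_iff' hs.compl).2 (ae_of_all _ fun p hp => ?_))
          have hnle : ¬ p.1 ≤ p.2 := hp
          have : p.2 ≤ p.1 := le_of_lt (not_le.1 hnle)
          simp only [FEAL, min_eq_right this]
    _ = v.restrict {q : ℝ × ℝ | q.2 ≤ (0:ℝ)} + v.restrict {q : ℝ × ℝ | q.2 ≤ (0:ℝ)}ᶜ := by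
        rw [e2, e1, ← Measure.restrict_map hL1.measurable hT,
          ← Measure.restrict_map hL2.measurable hT.compl, hL1.map_eq, hL2.map_eq]
    _ = v := Measure.restrict_add_restrict_compl hT

/-- Product of two `withDensity` measures on `ℝ`. -/
lemma prod_wd (f g : ℝ → ENNReal) (hf : Measurable f) (hg : Measurable g)
    [SigmaFinite (volume.withDensity f)] [SigmaFinite (volume.withDensity g)] :
    (volume.withDensity f).prod (volume.withDensity g)
      = ((volume : Measure ℝ).prod volume).withDensity (fun p => f p.1 * g p.2) := by
  refine Measure.prod_eq fun s t hs ht => ?_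
  rw [withDensity_apply _ (hs.prod ht), ← Measure.prod_restrict,
    lintegral_prod_mul hf.aemeasurable hg.aemeasurable,
    withDensity_apply _ hs, withDensity_apply _ ht]

lemma map_wd {μ ν : Measure (ℝ × ℝ)} (e : (ℝ × ℝ) ≃ᵐ (ℝ × ℝ)) (hme : MeasurePreserving e μ ν)
    (g : ℝ × ℝ → ENNReal) (hg : Measurable g) :
    Measure.map e (μ.withDensity g) = ν.withDensity (g ∘ e.symm) := by
  ext s hs
  rw [Measure.map_apply e.measurable hs, withDensity_apply _ (e.measurable hs),
    withDensity_apply _ hs, ← hme.map_eq,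
    setLIntegral_map hs (hg.comp e.symm.measurable) e.measurable]
  refine setLIntegral_congr_fun (e.measurable hs) (fun x _ => ?_)
  simp

end StmtAux

open StmtAux Set ProbabilityTheory

/-- Proposition 4.4(a): the detailed balance solution for `F_{E,AL}`: independent
shifted exponentials with a common shift have independent minimum and difference. -/
theorem stmt_14 (ρ σ τ : ℝ) (hρ : 0 < ρ) (hσ : 0 < σ) :
    Measure.map FEAL ((sExp ρ τ).prod (sExp σ τ)) = (sExp (ρ + σ) τ).prod (AL ρ σ) ∧
    ∀ (Ω : Type) (_ : MeasurableSpace Ω) (P : Measure Ω), IsProbabilityMeasure P →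
      ∀ X Y : Ω → ℝ, Measurable X → Measurable Y →
        Measure.map X P = sExp ρ τ → Measure.map Y P = sExp σ τ →
        ProbabilityTheory.IndepFun X Y P →
        (ProbabilityTheory.IndepFun (fun ω => min (X ω) (Y ω)) (fun ω => X ω - Y ω) P ∧
          Measure.map (fun ω => min (X ω) (Y ω)) P = sExp (ρ + σ) τ ∧
          Measure.map (fun ω => X ω - Y ω) P = AL ρ σ) := by
  have hρσ : (0:ℝ) < ρ + σ := by linarith
  haveI hP1 : IsProbabilityMeasure (sExp ρ τ) := sExp_prob hρ τ
  haveI hP2 : IsProbabilityMeasure (sExp σ τ) := sExp_prob hσ τ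
  haveI hP3 : IsProbabilityMeasure (sExp (ρ + σ) τ) := sExp_prob hρσ τ
  haveI hP4 : IsProbabilityMeasure (AL ρ σ) := AL_prob hρ hσ
  have hdens : (fun p : ℝ × ℝ => sDens ρ τ p.1 * sDens σ τ p.2) ∘ ⇑eFE.symm
      = fun p : ℝ × ℝ => sDens (ρ + σ) τ p.1 * aDens ρ σ p.2 := by
    funext q
    obtain ⟨m, u⟩ := q
    have hsymm : eFE.symm (m, u) = (m + max u 0, m - min u 0) := rfl
    simp only [Function.comp_apply, hsymm, sDens, aDens]
    rcases lt_or_ge 0 u with hu | hu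
    · rw [max_eq_left hu.le, min_eq_right hu.le, sub_zero, if_pos hu]
      by_cases hm : τ ≤ m
      · rw [if_pos hm, if_pos (by linarith : τ ≤ m + u), if_pos hm,
          ← ENNReal.ofReal_mul (by positivity), ← ENNReal.ofReal_mul (by positivity)]
        congr 1
        rw [mul_mul_mul_comm, ← Real.exp_add, mul_mul_mul_comm, ← Real.exp_add,
          show -ρ * (m + u - τ) + -σ * (m - τ) = -(ρ + σ) * (m - τ) + -ρ * u by ring]
        congr 1
        field_simp
      · rw [if_neg hm, if_neg hm]
        simp
    · rw [max_eq_right hu, min_eq_left hu, add_zero, if_neg (not_lt.2 hu)]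
      by_cases hm : τ ≤ m
      · rw [if_pos hm, if_pos (by linarith : τ ≤ m - u), if_pos hm,
          ← ENNReal.ofReal_mul (by positivity), ← ENNReal.ofReal_mul (by positivity)]
        congr 1
        rw [mul_mul_mul_comm, ← Real.exp_add, mul_mul_mul_comm, ← Real.exp_add,
          show -ρ * (m - τ) + -σ * (m - u - τ) = -(ρ + σ) * (m - τ) + σ * u by ring]
        congr 1
        field_simp
      · rw [if_neg hm, if_neg hm]
        simp
  haveI hS1 : SigmaFinite (volume.withDensity (sDens ρ τ)) := by
    rw [← sExp_eq]; infer_instance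
  haveI hS2 : SigmaFinite (volume.withDensity (sDens σ τ)) := by
    rw [← sExp_eq]; infer_instance
  haveI hS3 : SigmaFinite (volume.withDensity (sDens (ρ + σ) τ)) := by
    rw [← sExp_eq]; infer_instance
  haveI hS4 : SigmaFinite (volume.withDensity (aDens ρ σ)) := by
    rw [← AL_eq]; infer_instance
  have hmain : Measure.map FEAL ((sExp ρ τ).prod (sExp σ τ)) = (sExp (ρ + σ) τ).prod (AL ρ σ) := by
    rw [sExp_eq ρ τ, sExp_eq σ τ, sExp_eq (ρ + σ) τ, AL_eq,
      prod_wd _ _ (meas_sDens ρ τ) (meas_sDens σ τ),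
      prod_wd _ _ (meas_sDens (ρ + σ) τ) (meas_aDens ρ σ)]
    have hFe : FEAL = ⇑eFE := rfl
    rw [hFe, map_wd eFE ⟨eFE.measurable, map_FEAL_volume⟩
      (fun p => sDens ρ τ p.1 * sDens σ τ p.2)
      (((meas_sDens ρ τ).comp measurable_fst).mul ((meas_sDens σ τ).comp measurable_snd)),
      hdens]
  refine ⟨hmain, ?_⟩
  intro Ω mΩ P hPprob X Y hX hY hmapX hmapY hindep
  haveI := hPprob
  have hjoint : Measure.map (fun ω => (X ω, Y ω)) P = (sExp ρ τ).prod (sExp σ τ) := by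
    rw [(indepFun_iff_map_prod_eq_prod_map_map hX.aemeasurable hY.aemeasurable).1 hindep,
      hmapX, hmapY]
  have hjoint2 : Measure.map (fun ω => (min (X ω) (Y ω), X ω - Y ω)) P
      = (sExp (ρ + σ) τ).prod (AL ρ σ) := by
    have hcomp : (fun ω => (min (X ω) (Y ω), X ω - Y ω)) = FEAL ∘ (fun ω => (X ω, Y ω)) := rfl
    rw [hcomp, ← Measure.map_map measurable_FEAL (hX.prodMk hY), hjoint, hmain]
  have hmin : Measure.map (fun ω => min (X ω) (Y ω)) P = sExp (ρ + σ) τ := by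
    have : (fun ω => min (X ω) (Y ω))
        = Prod.fst ∘ (fun ω => (min (X ω) (Y ω), X ω - Y ω)) := rfl
    rw [this, ← Measure.map_map measurable_fst ((hX.min hY).prodMk (show Measurable fun ω => X ω - Y ω from hX.sub hY)), hjoint2]
    rw [← Measure.fst, Measure.fst_prod]
  have hsub : Measure.map (fun ω => X ω - Y ω) P = AL ρ σ := by
    have : (fun ω => X ω - Y ω)
        = Prod.snd ∘ (fun ω => (min (X ω) (Y ω), X ω - Y ω)) := rfl
    rw [this, ← Measure.map_map measurable_snd ((hX.min hY).prodMk (show Measurable fun ω => X ω - Y ω from hX.sub hY)), hjoint2]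
    rw [← Measure.snd, Measure.snd_prod]
  refine ⟨?_, hmin, hsub⟩
  rw [indepFun_iff_map_prod_eq_prod_map_map (hX.min hY).aemeasurable (show Measurable fun ω => X ω - Y ω from hX.sub hY).aemeasurable,
    hjoint2, hmin, hsub]
end

section
/- Let ρ, σ, τ > 0. Then the pushforward of the product measure AL(ρ,σ) ⊗ AL(ρ+σ,τ) under the involution F_{AL,AL}(x,y) = (min(0,x) − y, min(0, min(x,y)) − x − y) equals the product measure AL(τ,σ) ⊗ AL(σ+τ,ρ); that is, the quadruple (μ, ν, μ̃, ν̃) = (AL(ρ,σ), AL(ρ+σ,τ), AL(τ,σ), AL(σ+τ,ρ)) satisfies the detailed balance condition F_{AL,AL}(μ × ν) = μ̃ × ν̃. -/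
open MeasureTheory

/-- The involution `F_{AL,AL}(x,y) = (min(0,x) − y, min(0, min(x,y)) − x − y)`. -/
noncomputable def FALAL : ℝ × ℝ → ℝ × ℝ :=
  fun p => (min 0 p.1 - p.2, min 0 (min p.1 p.2) - p.1 - p.2)

/-!
`F_{AL,AL}` is `S ∘ swap ∘ S` for the shear `S(x,y) = (x, min(0,x) − y)`, so it preserves Lebesgue
measure on `ℝ²`. Writing the density of `AL(a,b)` as `ab/(a+b) · exp((a+b) min(0,x) − a x)`, both
product densities have the constant `ρστ/(ρ+σ+τ)`, and their exponents agree along `F` thanks to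
`min(0, min(0, min(0,x) − y) − x) = min(0,x) + min(0,y) − x − y`. A measure-preserving map carries
`f̃ ∘ F · Leb` to `f̃ · Leb`.
-/

theorem MeasureTheory.MeasurePreserving.map_withDensity_comp {α β : Type*} [MeasurableSpace α]
    [MeasurableSpace β] {μ : Measure α} {ν : Measure β} {T : α → β}
    (hT : MeasurePreserving T μ ν) {f : β → ENNReal} (hf : Measurable f) :
    (μ.withDensity (f ∘ T)).map T = ν.withDensity f := by
  ext s hs
  rw [Measure.map_apply hT.measurable hs, withDensity_apply _ (hT.measurable hs),
    withDensity_apply _ hs]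
  exact hT.setLIntegral_comp_preimage hs hf

theorem measurePreserving_prodMk_sub_left {α G : Type*} [MeasurableSpace α] [MeasurableSpace G]
    [AddGroup G] [MeasurableAdd G] [MeasurableNeg G] [MeasurableSub₂ G]
    (ν : Measure α) [SFinite ν] (μ : Measure G) [SFinite μ] [μ.IsNegInvariant]
    [μ.IsAddLeftInvariant] {g : α → G} (hg : Measurable g) :
    MeasurePreserving (fun p : α × G => (p.1, g p.1 - p.2)) (ν.prod μ) (ν.prod μ) :=
  (MeasurePreserving.id ν).skew_product (g := fun a y => g a - y) (by fun_prop)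
    (ae_of_all _ fun a => (Measure.measurePreserving_sub_left μ (g a)).map_eq)

lemma min_zero_min_sub_sub (x y : ℝ) :
    min 0 (min x y) - x - y = min 0 (min 0 x - y) - x := by
  simp only [min_def]
  split_ifs <;> linarith

lemma min_zero_min_zero_sub_sub (x y : ℝ) :
    min 0 (min 0 (min 0 x - y) - x) = min 0 x + min 0 y - x - y := by
  simp only [min_def]
  split_ifs <;> linarith

lemma FALAL_eq_comp :
    FALAL = (fun p : ℝ × ℝ => (p.1, min 0 p.1 - p.2)) ∘ Prod.swap ∘
      (fun p : ℝ × ℝ => (p.1, min 0 p.1 - p.2)) := by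
  ext ⟨x, y⟩
  · rfl
  · exact min_zero_min_sub_sub x y

lemma measurePreserving_FALAL :
    MeasurePreserving FALAL (volume.prod volume) (volume.prod volume) := by
  have hS := measurePreserving_prodMk_sub_left (volume : Measure ℝ) volume
    (g := fun x : ℝ => min 0 x) (by fun_prop)
  rw [FALAL_eq_comp]
  exact hS.comp (Measure.measurePreserving_swap.comp hS)

noncomputable def alDensity (a b x : ℝ) : ℝ :=
  a * b / (a + b) * Real.exp ((a + b) * min 0 x - a * x)

lemma alDensity_nonneg {a b : ℝ} (ha : 0 ≤ a) (hb : 0 ≤ b) (x : ℝ) : 0 ≤ alDensity a b x := by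
  unfold alDensity
  positivity

@[fun_prop]
lemma measurable_alDensity (a b : ℝ) : Measurable (alDensity a b) := by
  unfold alDensity
  fun_prop

lemma AL_eq_withDensity (a b : ℝ) :
    AL a b = volume.withDensity fun x => ENNReal.ofReal (alDensity a b x) := by
  unfold AL alDensity
  congr with x
  rcases lt_or_ge 0 x with hx | hx
  · rw [if_pos hx, min_eq_left hx.le]
    ring_nf
  · rw [if_neg hx.not_gt, min_eq_right hx]
    ring_nf

lemma alDensity_mul_alDensity_FALAL {ρ σ τ : ℝ} (hρσ : ρ + σ ≠ 0) (hστ : σ + τ ≠ 0)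
    (p : ℝ × ℝ) :
    alDensity τ σ (FALAL p).1 * alDensity (σ + τ) ρ (FALAL p).2
      = alDensity ρ σ p.1 * alDensity (ρ + σ) τ p.2 := by
  obtain ⟨x, y⟩ := p
  have hconst : τ * σ / (τ + σ) * ((σ + τ) * ρ / (σ + τ + ρ))
      = ρ * σ / (ρ + σ) * ((ρ + σ) * τ / (ρ + σ + τ)) := by
    rw [add_comm τ σ]
    field_simp
    ring
  have hexp : (τ + σ) * min 0 (min 0 x - y) - τ * (min 0 x - y)
        + ((σ + τ + ρ) * min 0 (min 0 (min 0 x - y) - x) - (σ + τ) * (min 0 (min 0 x - y) - x))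
      = (ρ + σ) * min 0 x - ρ * x + ((ρ + σ + τ) * min 0 y - (ρ + σ) * y) := by
    linear_combination (ρ + σ + τ) * min_zero_min_zero_sub_sub x y
  simp only [alDensity, FALAL, min_zero_min_sub_sub]
  rw [mul_mul_mul_comm, mul_mul_mul_comm (ρ * σ / (ρ + σ)), ← Real.exp_add, ← Real.exp_add,
    hconst, hexp]

/-- Proposition 4.4(b) (continuous case): the detailed balance condition for `F_{AL,AL}`
holds for the quadruple `(AL(ρ,σ), AL(ρ+σ,τ), AL(τ,σ), AL(σ+τ,ρ))`. -/
theorem stmt_15 (ρ σ τ : ℝ) (hρ : 0 < ρ) (hσ : 0 < σ) (hτ : 0 < τ) :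
    Measure.map FALAL ((AL ρ σ).prod (AL (ρ + σ) τ)) = (AL τ σ).prod (AL (σ + τ) ρ) := by
  have hm (a b : ℝ) : Measurable fun x => ENNReal.ofReal (alDensity a b x) := by fun_prop
  simp only [AL_eq_withDensity, prod_withDensity (hm _ _) (hm _ _)]
  conv_rhs => rw [← measurePreserving_FALAL.map_withDensity_comp (by fun_prop)]
  congr 2
  ext p
  rw [Function.comp_apply, ← ENNReal.ofReal_mul (alDensity_nonneg hρ.le hσ.le _),
    ← ENNReal.ofReal_mul (alDensity_nonneg hτ.le hσ.le _),
    alDensity_mul_alDensity_FALAL (by positivity) (by positivity)]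
end

section
/- Let ρ, σ > 0 and τ ∈ ℝ. Let μ̃ be the pushforward of sExp(ρ+σ,τ) under negation x ↦ −x, μ the pushforward of sExp(ρ,τ) under negation, and ν the pushforward of sExp(σ,τ) under negation. Then the pushforward of the product measure μ̃ ⊗ μ ⊗ ν under the map R^zero_{(0,1)} equals μ ⊗ ν; that is, the triple of negated shifted exponential distributions (−sExp(ρ+σ,τ), −sExp(ρ,τ), −sExp(σ,τ)) is stationary for the zero-temperature map R^zero_{(0,1)} (directed last passage percolation). -/
open MeasureTheory Real Set
open scoped ENNReal

lemma sExp_zero_eq (l : ℝ) : sExp l 0 = ProbabilityTheory.expMeasure l := by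
  rw [sExp, ProbabilityTheory.expMeasure, ProbabilityTheory.gammaMeasure]
  congr 1
  funext x
  rw [show ProbabilityTheory.gammaPDF 1 l x = ProbabilityTheory.exponentialPDF l x from rfl,
    ProbabilityTheory.exponentialPDF_eq]
  congr 1
  split_ifs <;> ring_nf

lemma sExp_prob {l : ℝ} (hl : 0 < l) : IsProbabilityMeasure (sExp l 0) := by
  rw [sExp_zero_eq]; exact ProbabilityTheory.isProbabilityMeasure_expMeasure hl

lemma sExp_apply (l : ℝ) {s : Set ℝ} (hs : MeasurableSet s) :
    sExp l 0 s = ∫⁻ x in s, ENNReal.ofReal (if 0 ≤ x then l * Real.exp (-l * x) else 0) := by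
  rw [sExp, withDensity_apply _ hs]
  simp

lemma sExp_Iic_zero (l : ℝ) {a : ℝ} (ha : a ≤ 0) : sExp l 0 (Iic a) = 0 := by
  rw [sExp_apply l measurableSet_Iic]
  refine le_antisymm ?_ (zero_le)
  calc ∫⁻ x in Iic a, ENNReal.ofReal (if 0 ≤ x then l * Real.exp (-l * x) else 0)
      ≤ ∫⁻ x in Iic 0, ENNReal.ofReal (if 0 ≤ x then l * Real.exp (-l * x) else 0) :=
        lintegral_mono_set (Iic_subset_Iic.2 ha)
    _ = ∫⁻ x in Iio 0, ENNReal.ofReal (if 0 ≤ x then l * Real.exp (-l * x) else 0) :=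
        (setLIntegral_congr (Iio_ae_eq_Iic (a := (0:ℝ)))).symm
    _ = ∫⁻ _x in Iio (0:ℝ), (0:ℝ≥0∞) := by
        refine setLIntegral_congr_fun measurableSet_Iio ?_
        intro x hx
        beta_reduce
        rw [if_neg (not_le.2 hx)]
        simp
    _ = 0 := by simp

lemma exp_integral_Ioi {l : ℝ} (hl : 0 < l) (a : ℝ) :
    ∫ x in Ioi a, l * Real.exp (-l * x) = Real.exp (-l * a) := by
  rw [MeasureTheory.integral_const_mul]
  have h := integral_comp_mul_left_Ioi (fun y => Real.exp (-y)) a hl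
  simp only [neg_mul] at h ⊢
  rw [h, integral_exp_neg_Ioi]
  rw [smul_eq_mul, ← mul_assoc, mul_inv_cancel₀ (ne_of_gt hl), one_mul]

lemma sExp_Ioi {l : ℝ} (hl : 0 < l) {a : ℝ} (ha : 0 ≤ a) :
    sExp l 0 (Ioi a) = ENNReal.ofReal (Real.exp (-l * a)) := by
  rw [sExp_apply l measurableSet_Ioi]
  have h1 : ∫⁻ x in Ioi a, ENNReal.ofReal (if 0 ≤ x then l * Real.exp (-l * x) else 0)
      = ∫⁻ x in Ioi a, ENNReal.ofReal (l * Real.exp (-l * x)) := by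
    refine setLIntegral_congr_fun measurableSet_Ioi ?_
    intro x hx
    beta_reduce
    rw [if_pos (le_of_lt (lt_of_le_of_lt ha hx))]
  rw [h1, ← ofReal_integral_eq_lintegral_ofReal]
  · rw [exp_integral_Ioi hl a]
  · exact (exp_neg_integrableOn_Ioi a hl).const_mul l
  · exact Filter.Eventually.of_forall fun x => by positivity

lemma sExp_Ioi' {l : ℝ} (hl : 0 < l) (a : ℝ) :
    sExp l 0 (Ioi a) = ENNReal.ofReal (Real.exp (-l * max a 0)) := by
  rcases le_or_gt 0 a with ha | ha
  · rw [max_eq_left ha]; exact sExp_Ioi hl ha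
  · rw [max_eq_right ha.le]
    refine le_antisymm ?_ ?_
    · calc sExp l 0 (Ioi a) ≤ sExp l 0 (Ioi 0 ∪ Iic 0) := by
            refine measure_mono fun x _ => ?_
            rcases lt_or_ge 0 x with h | h
            · exact Or.inl h
            · exact Or.inr h
        _ ≤ sExp l 0 (Ioi 0) + sExp l 0 (Iic 0) := measure_union_le _ _
        _ = ENNReal.ofReal (Real.exp (-l * 0)) := by
            rw [sExp_Iic_zero l le_rfl, add_zero, sExp_Ioi hl le_rfl]
    · calc ENNReal.ofReal (Real.exp (-l * 0)) = sExp l 0 (Ioi 0) := (sExp_Ioi hl le_rfl).symm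
        _ ≤ sExp l 0 (Ioi a) := measure_mono (Ioi_subset_Ioi ha.le)

lemma exp_integral_Ioc {l : ℝ} (hl : 0 < l) {a c : ℝ} (hac : a ≤ c) :
    ∫ x in Ioc a c, l * Real.exp (-l * x) = Real.exp (-l * a) - Real.exp (-l * c) := by
  rw [← intervalIntegral.integral_of_le hac]
  have h1 : ∀ x : ℝ, HasDerivAt (fun y => -Real.exp (-l * y)) (l * Real.exp (-l * x)) x := by
    intro x
    have := ((hasDerivAt_id x).const_mul (-l)).exp.neg
    simpa [mul_comm, neg_mul, Pi.neg_def] using this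
  rw [intervalIntegral.integral_eq_sub_of_hasDerivAt (fun x _ => h1 x)]
  · ring
  · apply Continuous.intervalIntegrable
    continuity

lemma key {ρ σ : ℝ} (hρ : 0 < ρ) (hσ : 0 < σ) {a : ℝ} (ha : 0 ≤ a) (b : ℝ) :
    ((sExp ρ 0).prod (sExp σ 0)) {p : ℝ × ℝ | a < p.1 ∧ a < p.2 ∧ b < p.2 - p.1}
      = ENNReal.ofReal (Real.exp (-(ρ + σ) * a) *
          (if 0 ≤ b then ρ / (ρ + σ) * Real.exp (-σ * b)
           else 1 - σ / (ρ + σ) * Real.exp (ρ * b))) := by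
  haveI := sExp_prob hρ
  haveI := sExp_prob hσ
  have hρσ : (0:ℝ) < ρ + σ := by linarith
  have hS : MeasurableSet {p : ℝ × ℝ | a < p.1 ∧ a < p.2 ∧ b < p.2 - p.1} := by
    apply MeasurableSet.inter
    · exact measurableSet_lt measurable_const measurable_fst
    · exact (measurableSet_lt measurable_const measurable_snd).inter
        (measurableSet_lt measurable_const (measurable_snd.sub measurable_fst))
  rw [Measure.prod_apply hS]
  have hslice : ∫⁻ u, sExp σ 0 (Prod.mk u ⁻¹' {p : ℝ × ℝ | a < p.1 ∧ a < p.2 ∧ b < p.2 - p.1}) ∂(sExp ρ 0)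
      = ∫⁻ u in Ioi a, sExp σ 0 (Ioi (max a (u + b))) ∂(sExp ρ 0) := by
    rw [← lintegral_indicator measurableSet_Ioi]
    refine lintegral_congr fun u => ?_
    by_cases hu : a < u
    · rw [Set.indicator_of_mem (show u ∈ Ioi a from hu)]
      congr 1
      ext v
      simp only [mem_preimage, mem_setOf_eq, mem_Ioi, lt_max_iff, max_lt_iff]
      constructor
      · rintro ⟨_, h2, h3⟩; exact ⟨h2, by linarith⟩
      · rintro ⟨h2, h3⟩; exact ⟨hu, h2, by linarith⟩
    · rw [Set.indicator_of_notMem (show u ∉ Ioi a from hu)]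
      have : Prod.mk u ⁻¹' {p : ℝ × ℝ | a < p.1 ∧ a < p.2 ∧ b < p.2 - p.1} = ∅ := by
        ext v; simp only [mem_preimage, mem_setOf_eq, mem_empty_iff_false, iff_false]
        rintro ⟨h1, -, -⟩; exact hu h1
      rw [this]; simp
  rw [hslice]
  have hmax0 : ∀ u : ℝ, 0 ≤ max a (u + b) := fun u => le_trans ha (le_max_left _ _)
  have step1 : ∫⁻ u in Ioi a, sExp σ 0 (Ioi (max a (u + b))) ∂(sExp ρ 0)
      = ∫⁻ u in Ioi a, ENNReal.ofReal (Real.exp (-σ * max a (u + b))) ∂(sExp ρ 0) := by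
    refine setLIntegral_congr_fun measurableSet_Ioi ?_
    intro u _
    beta_reduce
    rw [sExp_Ioi hσ (hmax0 u)]
  rw [step1]
  have hfm : Measurable fun x : ℝ => ENNReal.ofReal (if 0 ≤ x then ρ * Real.exp (-ρ * x) else 0) := by
    apply Measurable.ennreal_ofReal
    exact Measurable.ite measurableSet_Ici (by fun_prop) measurable_const
  have hgm : Measurable fun u : ℝ => ENNReal.ofReal (Real.exp (-σ * max a (u + b))) := by
    apply Measurable.ennreal_ofReal
    apply Continuous.measurable
    exact (continuous_const.mul (continuous_const.max (continuous_id.add continuous_const))).rexp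
  have step2 : ∫⁻ u in Ioi a, ENNReal.ofReal (Real.exp (-σ * max a (u + b))) ∂(sExp ρ 0)
      = ∫⁻ u in Ioi a, ENNReal.ofReal (if 0 ≤ u then ρ * Real.exp (-ρ * u) else 0)
          * ENNReal.ofReal (Real.exp (-σ * max a (u + b))) ∂volume := by
    rw [sExp, restrict_withDensity measurableSet_Ioi,
      lintegral_withDensity_eq_lintegral_mul _ (by simpa using hfm) hgm]
    simp only [Pi.mul_apply, sub_zero]
  rw [step2]
  have step3 : ∫⁻ u in Ioi a, ENNReal.ofReal (if 0 ≤ u then ρ * Real.exp (-ρ * u) else 0)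
          * ENNReal.ofReal (Real.exp (-σ * max a (u + b))) ∂volume
      = ∫⁻ u in Ioi a, ENNReal.ofReal (ρ * Real.exp (-ρ * u) * Real.exp (-σ * max a (u + b))) ∂volume := by
    refine setLIntegral_congr_fun measurableSet_Ioi ?_
    intro u hu
    beta_reduce
    rw [if_pos (le_of_lt (lt_of_le_of_lt ha hu)), ← ENNReal.ofReal_mul (by positivity)]
  rw [step3]
  -- integrability
  set h : ℝ → ℝ := fun u => ρ * Real.exp (-ρ * u) * Real.exp (-σ * max a (u + b)) with hh
  have hcont : Continuous h := by
    apply Continuous.mul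
    · exact continuous_const.mul (continuous_const.mul continuous_id).rexp
    · exact (continuous_const.mul (continuous_const.max (continuous_id.add continuous_const))).rexp
  have hbound : ∀ u : ℝ, ‖h u‖ ≤ ‖ρ * Real.exp (-ρ * u)‖ := by
    intro u
    rw [Real.norm_eq_abs, Real.norm_eq_abs, abs_of_nonneg (by positivity), abs_of_nonneg (by positivity)]
    have h1 : Real.exp (-σ * max a (u + b)) ≤ 1 := by
      rw [Real.exp_le_one_iff]
      have := hmax0 u
      nlinarith
    exact mul_le_of_le_one_right (by positivity) h1
  have hg_int : IntegrableOn (fun u : ℝ => ρ * Real.exp (-ρ * u)) (Ioi a) := by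
    simpa [neg_mul, IntegrableOn] using (exp_neg_integrableOn_Ioi a hρ).const_mul ρ
  have hInt : IntegrableOn h (Ioi a) :=
    Integrable.mono hg_int hcont.aestronglyMeasurable.restrict (ae_of_all _ hbound)
  rw [← ofReal_integral_eq_lintegral_ofReal hInt (ae_of_all _ fun u => by positivity)]
  congr 1
  -- now the real integral computation
  by_cases hb : 0 ≤ b
  · rw [if_pos hb]
    have hcongr : ∀ u ∈ Ioi a, h u = (Real.exp (-σ * b) * (ρ / (ρ + σ))) * ((ρ + σ) * Real.exp (-(ρ + σ) * u)) := by
      intro u hu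
      have hmax : max a (u + b) = u + b := max_eq_right (by simp only [mem_Ioi] at hu; linarith)
      rw [hh]
      simp only [hmax]
      have e : Real.exp (-ρ * u) * Real.exp (-σ * (u + b))
          = Real.exp (-σ * b) * Real.exp (-(ρ + σ) * u) := by
        rw [← Real.exp_add, ← Real.exp_add]; congr 1; ring
      rw [mul_assoc, e]
      field_simp
    rw [setIntegral_congr_fun measurableSet_Ioi hcongr, MeasureTheory.integral_const_mul,
      exp_integral_Ioi hρσ]
    ring
  · rw [if_neg hb]
    push_neg at hb
    have hab : a ≤ a - b := by linarith
    have hsplit : Ioi a = Ioc a (a - b) ∪ Ioi (a - b) := (Ioc_union_Ioi_eq_Ioi hab).symm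
    have hdisj : Disjoint (Ioc a (a - b)) (Ioi (a - b)) := Ioc_disjoint_Ioi le_rfl
    rw [hsplit, setIntegral_union hdisj measurableSet_Ioi (hInt.mono_set (by rw [hsplit]; exact subset_union_left)) (hInt.mono_set (by rw [hsplit]; exact subset_union_right))]
    have hpiece1 : ∫ u in Ioc a (a - b), h u
        = Real.exp (-σ * a) * (Real.exp (-ρ * a) - Real.exp (-ρ * (a - b))) := by
      have hcongr : ∀ u ∈ Ioc a (a - b), h u = Real.exp (-σ * a) * (ρ * Real.exp (-ρ * u)) := by
        intro u hu
        have hmax : max a (u + b) = a := max_eq_left (by rcases hu with ⟨_, h2⟩; linarith)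
        rw [hh]; simp only [hmax]; ring
      rw [setIntegral_congr_fun measurableSet_Ioc hcongr, MeasureTheory.integral_const_mul,
        exp_integral_Ioc hρ hab]
    have hpiece2 : ∫ u in Ioi (a - b), h u
        = Real.exp (-σ * b) * (ρ / (ρ + σ)) * Real.exp (-(ρ + σ) * (a - b)) := by
      have hcongr : ∀ u ∈ Ioi (a - b), h u = (Real.exp (-σ * b) * (ρ / (ρ + σ))) * ((ρ + σ) * Real.exp (-(ρ + σ) * u)) := by
        intro u hu
        have hmax : max a (u + b) = u + b := max_eq_right (by simp only [mem_Ioi] at hu; linarith)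
        rw [hh]
        simp only [hmax]
        have e : Real.exp (-ρ * u) * Real.exp (-σ * (u + b))
            = Real.exp (-σ * b) * Real.exp (-(ρ + σ) * u) := by
          rw [← Real.exp_add, ← Real.exp_add]; congr 1; ring
        rw [mul_assoc, e]
        field_simp
      rw [setIntegral_congr_fun measurableSet_Ioi hcongr, MeasureTheory.integral_const_mul,
        exp_integral_Ioi hρσ]
    rw [hpiece1, hpiece2]
    have e1 : Real.exp (-ρ * (a - b)) = Real.exp (-ρ * a) * Real.exp (ρ * b) := by
      rw [← Real.exp_add]; congr 1; ring
    have e2 : Real.exp (-σ * b) * Real.exp (-(ρ + σ) * (a - b))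
        = Real.exp (-ρ * a) * Real.exp (-σ * a) * Real.exp (ρ * b) := by
      rw [← Real.exp_add, ← Real.exp_add, ← Real.exp_add]; congr 1; ring
    have e3 : Real.exp (-(ρ + σ) * a) = Real.exp (-ρ * a) * Real.exp (-σ * a) := by
      rw [← Real.exp_add]; congr 1; ring
    rw [e3, e1]
    rw [show Real.exp (-σ * b) * (ρ / (ρ + σ)) * Real.exp (-(ρ + σ) * (a - b))
      = ρ / (ρ + σ) * (Real.exp (-σ * b) * Real.exp (-(ρ + σ) * (a - b))) by ring, e2]
    field_simp
    ring

lemma prod_null_left {ρ σ : ℝ} (hρ : 0 < ρ) (hσ : 0 < σ) {c : ℝ} (hc : c ≤ 0) :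
    ((sExp ρ 0).prod (sExp σ 0)) {p : ℝ × ℝ | p.1 ≤ c} = 0 := by
  haveI := sExp_prob hσ
  have : {p : ℝ × ℝ | p.1 ≤ c} = Iic c ×ˢ (univ : Set ℝ) := by
    ext p; simp [mem_prod]
  rw [this, Measure.prod_prod, sExp_Iic_zero ρ hc, zero_mul]

lemma prod_null_right {ρ σ : ℝ} (hρ : 0 < ρ) (hσ : 0 < σ) {c : ℝ} (hc : c ≤ 0) :
    ((sExp ρ 0).prod (sExp σ 0)) {p : ℝ × ℝ | p.2 ≤ c} = 0 := by
  haveI := sExp_prob hσ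
  have : {p : ℝ × ℝ | p.2 ≤ c} = (univ : Set ℝ) ×ˢ Iic c := by
    ext p; simp [mem_prod]
  rw [this, Measure.prod_prod, sExp_Iic_zero σ hc, mul_zero]

lemma key' {ρ σ : ℝ} (hρ : 0 < ρ) (hσ : 0 < σ) (a b : ℝ) :
    ((sExp ρ 0).prod (sExp σ 0)) {p : ℝ × ℝ | a < p.1 ∧ a < p.2 ∧ b < p.2 - p.1}
      = ENNReal.ofReal (Real.exp (-(ρ + σ) * max a 0) *
          (if 0 ≤ b then ρ / (ρ + σ) * Real.exp (-σ * b)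
           else 1 - σ / (ρ + σ) * Real.exp (ρ * b))) := by
  rcases le_or_gt 0 a with ha | ha
  · rw [max_eq_left ha]; exact key hρ hσ ha b
  · rw [max_eq_right ha.le]
    have hsub : {p : ℝ × ℝ | 0 < p.1 ∧ 0 < p.2 ∧ b < p.2 - p.1}
        ⊆ {p : ℝ × ℝ | a < p.1 ∧ a < p.2 ∧ b < p.2 - p.1} := by
      rintro p ⟨h1, h2, h3⟩; exact ⟨lt_trans ha h1, lt_trans ha h2, h3⟩
    have hN : ((sExp ρ 0).prod (sExp σ 0)) ({p : ℝ × ℝ | p.1 ≤ 0} ∪ {p : ℝ × ℝ | p.2 ≤ 0}) = 0 :=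
      le_antisymm (le_trans (measure_union_le _ _)
        (by rw [prod_null_left hρ hσ le_rfl, prod_null_right hρ hσ le_rfl, add_zero])) (zero_le)
    have heq : ((sExp ρ 0).prod (sExp σ 0)) {p : ℝ × ℝ | a < p.1 ∧ a < p.2 ∧ b < p.2 - p.1}
        = ((sExp ρ 0).prod (sExp σ 0)) {p : ℝ × ℝ | 0 < p.1 ∧ 0 < p.2 ∧ b < p.2 - p.1} := by
      refine le_antisymm ?_ (measure_mono hsub)
      calc ((sExp ρ 0).prod (sExp σ 0)) {p : ℝ × ℝ | a < p.1 ∧ a < p.2 ∧ b < p.2 - p.1}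
          ≤ ((sExp ρ 0).prod (sExp σ 0)) ({p : ℝ × ℝ | 0 < p.1 ∧ 0 < p.2 ∧ b < p.2 - p.1}
              ∪ ({p : ℝ × ℝ | p.1 ≤ 0} ∪ {p : ℝ × ℝ | p.2 ≤ 0})) := by
            refine measure_mono fun p hp => ?_
            rcases le_or_gt p.1 0 with h1 | h1
            · exact Or.inr (Or.inl h1)
            rcases le_or_gt p.2 0 with h2 | h2
            · exact Or.inr (Or.inr h2)
            · exact Or.inl ⟨h1, h2, hp.2.2⟩
        _ ≤ ((sExp ρ 0).prod (sExp σ 0)) {p : ℝ × ℝ | 0 < p.1 ∧ 0 < p.2 ∧ b < p.2 - p.1}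
              + ((sExp ρ 0).prod (sExp σ 0)) ({p : ℝ × ℝ | p.1 ≤ 0} ∪ {p : ℝ × ℝ | p.2 ≤ 0}) :=
            measure_union_le _ _
        _ = ((sExp ρ 0).prod (sExp σ 0)) {p : ℝ × ℝ | 0 < p.1 ∧ 0 < p.2 ∧ b < p.2 - p.1} := by
            rw [hN, add_zero]
    rw [heq, key hρ hσ le_rfl b]

lemma D_nonneg {ρ σ : ℝ} (hρ : 0 < ρ) (hσ : 0 < σ) (b : ℝ) :
    0 ≤ (if 0 ≤ b then ρ / (ρ + σ) * Real.exp (-σ * b)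
         else 1 - σ / (ρ + σ) * Real.exp (ρ * b)) := by
  have hρσ : (0:ℝ) < ρ + σ := by linarith
  split_ifs with hb
  · positivity
  · push_neg at hb
    have h1 : Real.exp (ρ * b) < 1 := by
      rw [Real.exp_lt_one_iff]
      nlinarith
    have h2 : σ / (ρ + σ) < 1 := by
      rw [div_lt_one hρσ]; linarith
    nlinarith [Real.exp_pos (ρ * b), div_pos hσ hρσ]

lemma lemB {ρ σ : ℝ} (hρ : 0 < ρ) (hσ : 0 < σ) :
    Measure.map (fun p : ℝ × ℝ => (min p.1 p.2, p.2 - p.1)) ((sExp ρ 0).prod (sExp σ 0))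
      = (sExp (ρ + σ) 0).prod
          (Measure.map (fun p : ℝ × ℝ => p.2 - p.1) ((sExp ρ 0).prod (sExp σ 0))) := by
  haveI := sExp_prob hρ
  haveI := sExp_prob hσ
  haveI := sExp_prob (show (0:ℝ) < ρ + σ by linarith)
  have hρσ : (0:ℝ) < ρ + σ := by linarith
  have hSm : Measurable (fun p : ℝ × ℝ => (min p.1 p.2, p.2 - p.1)) :=
    (measurable_fst.min measurable_snd).prodMk (measurable_snd.sub measurable_fst)
  have hDm : Measurable (fun p : ℝ × ℝ => p.2 - p.1) := measurable_snd.sub measurable_fst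
  haveI : IsProbabilityMeasure
      (Measure.map (fun p : ℝ × ℝ => (min p.1 p.2, p.2 - p.1)) ((sExp ρ 0).prod (sExp σ 0))) :=
    Measure.isProbabilityMeasure_map hSm.aemeasurable
  haveI : IsProbabilityMeasure
      (Measure.map (fun p : ℝ × ℝ => p.2 - p.1) ((sExp ρ 0).prod (sExp σ 0))) :=
    Measure.isProbabilityMeasure_map hDm.aemeasurable
  have hspan : IsCountablySpanning (range (Ioi : ℝ → Set ℝ)) := by
    refine ⟨fun n => Ioi (-(n : ℝ)), fun n => mem_range_self _, ?_⟩
    ext x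
    simp only [mem_iUnion, mem_Ioi, mem_univ, iff_true]
    obtain ⟨n, hn⟩ := exists_nat_gt (-x)
    exact ⟨n, by linarith⟩
  have hR : (inferInstance : MeasurableSpace ℝ)
      = MeasurableSpace.generateFrom (range (Ioi : ℝ → Set ℝ)) := by
    rw [BorelSpace.measurable_eq (α := ℝ), borel_eq_generateFrom_Ioi]
  have hgen : (inferInstance : MeasurableSpace (ℝ × ℝ))
      = MeasurableSpace.generateFrom
          (image2 (· ×ˢ ·) (range (Ioi : ℝ → Set ℝ)) (range (Ioi : ℝ → Set ℝ))) := by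
    rw [← generateFrom_prod_eq hspan hspan, ← hR]
  refine MeasureTheory.ext_of_generate_finite _ hgen
    (IsPiSystem.prod isPiSystem_Ioi isPiSystem_Ioi) ?_ ?_
  · rintro s ⟨s₁, ⟨x, rfl⟩, s₂, ⟨y, rfl⟩, rfl⟩
    rw [Measure.map_apply hSm (measurableSet_Ioi.prod measurableSet_Ioi),
      Measure.prod_prod,
      Measure.map_apply hDm measurableSet_Ioi]
    have hpre1 : (fun p : ℝ × ℝ => (min p.1 p.2, p.2 - p.1)) ⁻¹' (Ioi x ×ˢ Ioi y)
        = {p : ℝ × ℝ | x < p.1 ∧ x < p.2 ∧ y < p.2 - p.1} := by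
      ext p
      simp only [mem_preimage, mem_prod, mem_Ioi, lt_min_iff, mem_setOf_eq]
      tauto
    have hpre2 : (fun p : ℝ × ℝ => p.2 - p.1) ⁻¹' Ioi y
        = {p : ℝ × ℝ | y < p.2 - p.1} := rfl
    have hpre2' : ((sExp ρ 0).prod (sExp σ 0)) {p : ℝ × ℝ | y < p.2 - p.1}
        = ((sExp ρ 0).prod (sExp σ 0)) {p : ℝ × ℝ | 0 < p.1 ∧ 0 < p.2 ∧ y < p.2 - p.1} := by
      have hN : ((sExp ρ 0).prod (sExp σ 0)) ({p : ℝ × ℝ | p.1 ≤ 0} ∪ {p : ℝ × ℝ | p.2 ≤ 0}) = 0 :=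
        le_antisymm (le_trans (measure_union_le _ _)
          (by rw [prod_null_left hρ hσ le_rfl, prod_null_right hρ hσ le_rfl, add_zero])) (zero_le)
      refine le_antisymm ?_ (measure_mono fun p hp => hp.2.2)
      calc ((sExp ρ 0).prod (sExp σ 0)) {p : ℝ × ℝ | y < p.2 - p.1}
          ≤ ((sExp ρ 0).prod (sExp σ 0)) ({p : ℝ × ℝ | 0 < p.1 ∧ 0 < p.2 ∧ y < p.2 - p.1}
              ∪ ({p : ℝ × ℝ | p.1 ≤ 0} ∪ {p : ℝ × ℝ | p.2 ≤ 0})) := by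
            refine measure_mono fun p hp => ?_
            rcases le_or_gt p.1 0 with h1 | h1
            · exact Or.inr (Or.inl h1)
            rcases le_or_gt p.2 0 with h2 | h2
            · exact Or.inr (Or.inr h2)
            · exact Or.inl ⟨h1, h2, hp⟩
        _ ≤ ((sExp ρ 0).prod (sExp σ 0)) {p : ℝ × ℝ | 0 < p.1 ∧ 0 < p.2 ∧ y < p.2 - p.1}
              + ((sExp ρ 0).prod (sExp σ 0)) ({p : ℝ × ℝ | p.1 ≤ 0} ∪ {p : ℝ × ℝ | p.2 ≤ 0}) :=
            measure_union_le _ _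
        _ = ((sExp ρ 0).prod (sExp σ 0)) {p : ℝ × ℝ | 0 < p.1 ∧ 0 < p.2 ∧ y < p.2 - p.1} := by
            rw [hN, add_zero]
    rw [hpre1, hpre2, hpre2', key' hρ hσ x y, key' hρ hσ 0 y, sExp_Ioi' hρσ x]
    rw [← ENNReal.ofReal_mul (by positivity)]
    congr 1
    simp only [max_self, mul_zero, Real.exp_zero, one_mul]
  · simp [measure_univ]

lemma sExp_shift (l c : ℝ) : sExp l c = Measure.map (fun x => x + c) (sExp l 0) := by
  ext s hs
  rw [Measure.map_apply (measurable_add_const c) hs, sExp, sExp,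
    withDensity_apply _ hs, withDensity_apply _ (measurable_add_const c hs)]
  have hmp : MeasurePreserving (fun x : ℝ => x + c) volume volume :=
    measurePreserving_add_right volume c
  have hemb : MeasurableEmbedding (fun x : ℝ => x + c) :=
    (Homeomorph.addRight c).measurableEmbedding
  rw [← hmp.setLIntegral_comp_preimage_emb hemb
    (fun y => ENNReal.ofReal (if c ≤ y then l * Real.exp (-l * (y - c)) else 0)) s]
  refine setLIntegral_congr_fun (hemb.measurable hs) ?_
  intro x _
  have h1 : (c ≤ x + c) = (0 ≤ x) := by
    simp [le_add_iff_nonneg_left]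
  simp only [add_sub_cancel_right, sub_zero, h1]

lemma min_self_add (a x : ℝ) : min a (a + x) = a + min 0 x := by
  rcases le_total 0 x with h | h
  · rw [min_eq_left (by linarith), min_eq_left h, add_zero]
  · rw [min_eq_right (by linarith), min_eq_right h]

lemma min_add_self (a y : ℝ) : min (a + y) a = a + min y 0 := by
  rcases le_total y 0 with h | h
  · rw [min_eq_left (by linarith), min_eq_left h]
  · rw [min_eq_right (by linarith), min_eq_right h, add_zero]


/-- Theorem 4.5(a) (continuous case): the triple of negated shifted exponential
distributions `(−sExp(ρ+σ,τ), −sExp(ρ,τ), −sExp(σ,τ))` is stationary for directed last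
passage percolation `R^zero_{(0,1)}`. -/
theorem stmt_17 (ρ σ τ : ℝ) (hρ : 0 < ρ) (hσ : 0 < σ) :
    Measure.map Rz01
        ((Measure.map (fun x : ℝ => -x) (sExp (ρ + σ) τ)).prod
          ((Measure.map (fun x : ℝ => -x) (sExp ρ τ)).prod
            (Measure.map (fun x : ℝ => -x) (sExp σ τ))))
      = (Measure.map (fun x : ℝ => -x) (sExp ρ τ)).prod
          (Measure.map (fun x : ℝ => -x) (sExp σ τ)) := by
  have hρσ : (0:ℝ) < ρ + σ := by linarith
  haveI := sExp_prob hρ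
  haveI := sExp_prob hσ
  haveI := sExp_prob hρσ
  set φ : ℝ → ℝ := fun x => -x - τ with hφ
  have hφm : Measurable φ := measurable_neg.sub measurable_const
  -- rewrite the negated shifted measures as pushforwards of sExp _ 0 by φ
  have hmap1 : ∀ l : ℝ, Measure.map (fun x : ℝ => -x) (sExp l τ) = Measure.map φ (sExp l 0) := by
    intro l
    rw [sExp_shift l τ, Measure.map_map measurable_neg (measurable_add_const τ)]
    congr 1
    funext x
    simp only [hφ, Function.comp_apply]
    ring
  rw [hmap1 (ρ + σ), hmap1 ρ, hmap1 σ]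
  haveI : IsProbabilityMeasure (Measure.map φ (sExp ρ 0)) :=
    Measure.isProbabilityMeasure_map hφm.aemeasurable
  haveI : IsProbabilityMeasure (Measure.map φ (sExp σ 0)) :=
    Measure.isProbabilityMeasure_map hφm.aemeasurable
  haveI : IsProbabilityMeasure (Measure.map φ (sExp (ρ + σ) 0)) :=
    Measure.isProbabilityMeasure_map hφm.aemeasurable
  set ν₀ := Measure.map φ (sExp (ρ + σ) 0) with hν₀
  set ν₁ := Measure.map φ (sExp ρ 0) with hν₁
  set ν₂ := Measure.map φ (sExp σ 0) with hν₂
  set T : ℝ × ℝ → ℝ × ℝ := fun q => (max q.1 q.2, q.1 - q.2) with hT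
  set Tinv : ℝ × ℝ → ℝ × ℝ := fun q => (q.1 + min 0 q.2, q.1 + min (-q.2) 0) with hTinv
  have hTm : Measurable T := (measurable_fst.max measurable_snd).prodMk
    (measurable_fst.sub measurable_snd)
  have hTinvm : Measurable Tinv :=
    (measurable_fst.add (measurable_const.min measurable_snd)).prodMk
      (measurable_fst.add (measurable_snd.neg.min measurable_const))
  have hdm : Measurable (fun p : ℝ × ℝ => p.1 - p.2) := measurable_fst.sub measurable_snd
  have hdm' : Measurable (fun p : ℝ × ℝ => p.2 - p.1) := measurable_snd.sub measurable_fst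
  set Δ := Measure.map (fun p : ℝ × ℝ => p.1 - p.2) (ν₁.prod ν₂) with hΔdef
  -- product as pushforward
  have hprod : ν₁.prod ν₂ = Measure.map (Prod.map φ φ) ((sExp ρ 0).prod (sExp σ 0)) := by
    rw [hν₁, hν₂, Measure.map_prod_map _ _ hφm hφm]
  have hΔ : Δ = Measure.map (fun p : ℝ × ℝ => p.2 - p.1) ((sExp ρ 0).prod (sExp σ 0)) := by
    rw [hΔdef, hprod, Measure.map_map hdm (hφm.prodMap hφm)]
    congr 1
    funext p
    simp only [Function.comp_apply, Prod.map, hφ]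
    ring
  -- step 1 : LHS = map Tinv (ν₀.prod Δ)
  have h1 : Measure.map Rz01 (ν₀.prod (ν₁.prod ν₂)) = Measure.map Tinv (ν₀.prod Δ) := by
    have hcomp : Rz01 = Tinv ∘ (Prod.map (id : ℝ → ℝ) (fun p : ℝ × ℝ => p.1 - p.2)) := by
      funext p
      obtain ⟨a, b, c⟩ := p
      simp only [Rz01, Function.comp_apply, Prod.map, id, hTinv]
      refine Prod.ext ?_ ?_
      · simp only []
        rw [show a + b - c = a + (b - c) by ring, min_self_add]
      · simp only []
        rw [show a + c - b = a + (c - b) by ring, min_add_self, show -(b - c) = c - b by ring]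
    rw [hcomp, ← Measure.map_map hTinvm (measurable_id.prodMap hdm),
      ← Measure.map_prod_map _ _ measurable_id hdm, Measure.map_id]
  -- step 2 : ν₀.prod Δ = map T (ν₁.prod ν₂)
  have h2 : ν₀.prod Δ = Measure.map T (ν₁.prod ν₂) := by
    have hS : Measurable (fun p : ℝ × ℝ => (min p.1 p.2, p.2 - p.1)) :=
      (measurable_fst.min measurable_snd).prodMk hdm'
    have hcomp2 : T ∘ Prod.map φ φ
        = (Prod.map φ (id : ℝ → ℝ)) ∘ (fun p : ℝ × ℝ => (min p.1 p.2, p.2 - p.1)) := by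
      funext p
      obtain ⟨u, v⟩ := p
      simp only [Function.comp_apply, Prod.map, hT, hφ, id]
      refine Prod.ext ?_ ?_
      · simp only []
        rcases le_total u v with h | h
        · rw [min_eq_left h, max_eq_left (by linarith)]
        · rw [min_eq_right h, max_eq_right (by linarith)]
      · simp only []
        ring
    rw [hprod, Measure.map_map hTm (hφm.prodMap hφm), hcomp2,
      ← Measure.map_map (hφm.prodMap measurable_id) hS, lemB hρ hσ,
      ← Measure.map_prod_map _ _ hφm measurable_id, Measure.map_id, ← hΔ, ← hν₀]
  -- step 3 : map Tinv (map T (ν₁.prod ν₂)) = ν₁.prod ν₂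
  rw [h1, h2, Measure.map_map hTinvm hTm]
  have hid : Tinv ∘ T = id := by
    funext q
    obtain ⟨x, y⟩ := q
    simp only [Function.comp_apply, hT, hTinv, id]
    refine Prod.ext ?_ ?_
    · simp only []
      rcases le_total x y with h | h
      · rw [max_eq_right h, min_eq_right (by linarith)]; ring
      · rw [max_eq_left h, min_eq_left (by linarith)]; ring
    · simp only []
      rcases le_total x y with h | h
      · rw [max_eq_right h, min_eq_right (by linarith)]; ring
      · rw [max_eq_left h, min_eq_left (by linarith)]; ring
  rw [hid, Measure.map_id]
end

section
/- Let ρ, σ, τ > 0. Let μ̃ := AL(τ,σ), let μ be the pushforward of AL(ρ+σ,τ) under the map x ↦ max(x,0), and let ν be the pushforward of AL(σ,ρ) under the map x ↦ min(x,0). Then the pushforward of the product measure μ̃ ⊗ μ ⊗ ν under the map R̃^zero_{(1,−1)} equals μ ⊗ ν; that is, the triple (AL(τ,σ), AL(ρ+σ,τ) ∨ 0, AL(σ,ρ) ∧ 0) is stationary for the zero-temperature limit R̃^zero_{(1,−1)} of the beta random polymer (Bernoulli-exponential first passage percolation / the river delta model). -/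
open MeasureTheory

/-- The zero-temperature map `R̃^zero_{(1,−1)}(a,b,c)
= (min(−min(0,a), max(a,0)+b−c), min(−min(0,a)+c−b, max(a,0)))`. -/
noncomputable def Rtz1m1 : ℝ × ℝ × ℝ → ℝ × ℝ :=
  fun p => (min (-min 0 p.1) (max p.1 0 + p.2.1 - p.2.2),
    min (-min 0 p.1 + p.2.2 - p.2.1) (max p.1 0))

set_option linter.unusedVariables false

open Set Real
open scoped ENNReal

lemma int_exp_Ioi {l : ℝ} (hl : 0 < l) (t : ℝ) :
    ∫ x in Ioi t, exp (-(l*x)) = exp (-(l*t)) / l := by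
  have := integral_comp_mul_left_Ioi (fun x => exp (-x)) t hl
  simp only [smul_eq_mul] at this
  rw [this, integral_exp_neg_Ioi]
  field_simp

lemma int_exp_Iio {l : ℝ} (hl : 0 < l) (t : ℝ) :
    ∫ x in Iio t, exp (l*x) = exp (l*t) / l := by
  rw [setIntegral_congr_set Iio_ae_eq_Iic]
  have h : ∀ x : ℝ, exp (l*x) = (fun y => exp (-(l*y))) (-x) := fun x => by simp
  rw [funext h, integral_comp_neg_Iic t (fun y => exp (-(l*y))), int_exp_Ioi hl]
  simp

lemma integrableOn_exp_Ioi {l : ℝ} (hl : 0 < l) (t : ℝ) :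
    IntegrableOn (fun x => exp (-(l*x))) (Ioi t) := by
  have := exp_neg_integrableOn_Ioi t hl
  simpa [neg_mul] using this

lemma integrableOn_exp_Iio {l : ℝ} (hl : 0 < l) (t : ℝ) :
    IntegrableOn (fun x => exp (l*x)) (Iio t) := by
  rw [IntegrableOn, Measure.restrict_congr_set Iio_ae_eq_Iic]
  have A : MeasurableEmbedding fun x : ℝ => -x :=
    (Homeomorph.neg ℝ).isClosedEmbedding.measurableEmbedding
  rw [← Measure.map_neg_eq_self (volume : Measure ℝ), A.restrict_map,
    A.integrable_map_iff]
  rw [neg_preimage, neg_Iic]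
  have hco : ((fun x : ℝ => exp (l*x)) ∘ fun x : ℝ => -x) = fun x : ℝ => exp (-(l*x)) := by
    funext x; simp
  rw [hco, ← IntegrableOn, integrableOn_Ici_iff_integrableOn_Ioi]
  exact integrableOn_exp_Ioi hl (-t)

lemma int_exp_Ioc {l : ℝ} (hl : 0 < l) {s t : ℝ} (hst : s ≤ t) :
    ∫ x in Ioc s t, exp (-(l*x)) = (exp (-(l*s)) - exp (-(l*t))) / l := by
  have hl' : l ≠ 0 := ne_of_gt hl
  rw [← intervalIntegral.integral_of_le hst]
  have h : ∀ x : ℝ, exp (-(l*x)) = (fun y => exp y) ((-l) * x) := fun x => by simp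
  rw [funext h, intervalIntegral.integral_comp_mul_left _ (by simpa using hl' : (-l) ≠ 0)]
  rw [integral_exp, smul_eq_mul]
  field_simp
  ring

lemma lint_exp_Ioi {l c : ℝ} (hl : 0 < l) (hc : 0 ≤ c) (t : ℝ) :
    ∫⁻ x in Ioi t, ENNReal.ofReal (c * exp (-(l*x))) = ENNReal.ofReal (c * exp (-(l*t)) / l) := by
  rw [← ofReal_integral_eq_lintegral_ofReal ((integrableOn_exp_Ioi hl t).const_mul c)
    (Filter.Eventually.of_forall fun x => by positivity)]
  rw [integral_const_mul, int_exp_Ioi hl, mul_div_assoc]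

lemma lint_exp_Iio {l c : ℝ} (hl : 0 < l) (hc : 0 ≤ c) (t : ℝ) :
    ∫⁻ x in Iio t, ENNReal.ofReal (c * exp (l*x)) = ENNReal.ofReal (c * exp (l*t) / l) := by
  rw [← ofReal_integral_eq_lintegral_ofReal ((integrableOn_exp_Iio hl t).const_mul c)
    (Filter.Eventually.of_forall fun x => by positivity)]
  rw [integral_const_mul, int_exp_Iio hl, mul_div_assoc]

lemma lint_exp_Ioc {l c : ℝ} (hl : 0 < l) (hc : 0 ≤ c) {s t : ℝ} (hst : s ≤ t) :
    ∫⁻ x in Ioc s t, ENNReal.ofReal (c * exp (-(l*x)))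
      = ENNReal.ofReal (c * (exp (-(l*s)) - exp (-(l*t))) / l) := by
  rw [← ofReal_integral_eq_lintegral_ofReal
    (((integrableOn_exp_Ioi hl s).mono_set Ioc_subset_Ioi_self).const_mul c)
    (Filter.Eventually.of_forall fun x => by positivity)]
  rw [integral_const_mul, int_exp_Ioc hl hst, mul_div_assoc]

noncomputable def alD (l₁ l₂ : ℝ) : ℝ → ℝ≥0∞ := fun x =>
  ENNReal.ofReal
    (if 0 < x then l₁ * l₂ / (l₁ + l₂) * Real.exp (-l₁ * x)
      else l₁ * l₂ / (l₁ + l₂) * Real.exp (l₂ * x))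

lemma AL_eq (l₁ l₂ : ℝ) : AL l₁ l₂ = volume.withDensity (alD l₁ l₂) := rfl

lemma measurable_alD (l₁ l₂ : ℝ) : Measurable (alD l₁ l₂) := by
  refine ENNReal.measurable_ofReal.comp (Measurable.ite measurableSet_Ioi ?_ ?_) <;> fun_prop

lemma AL_lintegral (l₁ l₂ : ℝ) (f : ℝ → ℝ≥0∞) (hf : Measurable f) :
    ∫⁻ x, f x ∂(AL l₁ l₂) = ∫⁻ x, alD l₁ l₂ x * f x ∂volume := by
  rw [AL_eq, lintegral_withDensity_eq_lintegral_mul volume (measurable_alD l₁ l₂) hf]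
  rfl

lemma AL_apply (l₁ l₂ : ℝ) {s : Set ℝ} (hs : MeasurableSet s) :
    AL l₁ l₂ s = ∫⁻ x in s, alD l₁ l₂ x ∂volume := withDensity_apply _ hs

lemma AL_setLIntegral_Iio (l₁ l₂ : ℝ) {t : ℝ} (f : ℝ → ℝ≥0∞) (hf : Measurable f) :
    ∫⁻ x in Set.Iio t, f x ∂(AL l₁ l₂) = ∫⁻ x in Set.Iio t, alD l₁ l₂ x * f x ∂volume := by
  rw [AL_eq, MeasureTheory.restrict_withDensity measurableSet_Iio,
    lintegral_withDensity_eq_lintegral_mul _ (measurable_alD _ _) hf]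
  rfl

variable {l₁ l₂ : ℝ}

lemma alD_pos (h₁ : 0 < l₁) (h₂ : 0 < l₂) {x : ℝ} (hx : 0 < x) :
    alD l₁ l₂ x = ENNReal.ofReal (l₁ * l₂ / (l₁ + l₂) * exp (-(l₁ * x))) := by
  simp [alD, if_pos hx, neg_mul]

lemma alD_nonpos (h₁ : 0 < l₁) (h₂ : 0 < l₂) {x : ℝ} (hx : x ≤ 0) :
    alD l₁ l₂ x = ENNReal.ofReal (l₁ * l₂ / (l₁ + l₂) * exp (l₂ * x)) := by
  simp [alD, if_neg (not_lt.2 hx)]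

lemma AL_Iio (h₁ : 0 < l₁) (h₂ : 0 < l₂) {v : ℝ} (hv : v ≤ 0) :
    AL l₁ l₂ (Iio v) = ENNReal.ofReal (l₁/(l₁+l₂) * exp (l₂ * v)) := by
  rw [AL_apply _ _ measurableSet_Iio]
  rw [setLIntegral_congr_fun measurableSet_Iio
    (fun x (hx : x < v) =>
      alD_nonpos h₁ h₂ (le_of_lt (lt_of_lt_of_le hx hv)))]
  rw [lint_exp_Iio h₂ (by positivity) v]
  congr 1
  have e2 : l₂ ≠ 0 := ne_of_gt h₂
  have e12 : l₁ + l₂ ≠ 0 := by positivity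
  field_simp

lemma AL_Iic (h₁ : 0 < l₁) (h₂ : 0 < l₂) {v : ℝ} (hv : v ≤ 0) :
    AL l₁ l₂ (Iic v) = ENNReal.ofReal (l₁/(l₁+l₂) * exp (l₂ * v)) := by
  rw [AL_apply _ _ measurableSet_Iic, ← Measure.restrict_congr_set Iio_ae_eq_Iic,
    ← AL_apply _ _ measurableSet_Iio, AL_Iio h₁ h₂ hv]

lemma AL_Ioi (h₁ : 0 < l₁) (h₂ : 0 < l₂) {u : ℝ} (hu : 0 ≤ u) :
    AL l₁ l₂ (Ioi u) = ENNReal.ofReal (l₂/(l₁+l₂) * exp (-(l₁ * u))) := by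
  rw [AL_apply _ _ measurableSet_Ioi]
  rw [setLIntegral_congr_fun measurableSet_Ioi
    (fun x (hx : u < x) =>
      alD_pos h₁ h₂ (lt_of_le_of_lt hu hx))]
  rw [lint_exp_Ioi h₁ (by positivity) u]
  congr 1
  have e1 : l₁ ≠ 0 := ne_of_gt h₁
  have e12 : l₁ + l₂ ≠ 0 := by positivity
  field_simp

lemma AL_prob (h₁ : 0 < l₁) (h₂ : 0 < l₂) : IsProbabilityMeasure (AL l₁ l₂) := by
  constructor
  rw [← Iic_union_Ioi (a := (0:ℝ)), measure_union (Iic_disjoint_Ioi le_rfl) measurableSet_Ioi,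
    AL_Iic h₁ h₂ le_rfl, AL_Ioi h₁ h₂ le_rfl]
  rw [← ENNReal.ofReal_add (by positivity) (by positivity), ← ENNReal.ofReal_one]
  congr 1
  have e1 : l₁ ≠ 0 := ne_of_gt h₁
  have e2 : l₂ ≠ 0 := ne_of_gt h₂
  have e12 : l₁ + l₂ ≠ 0 := by positivity
  simp only [mul_zero, neg_zero, exp_zero, mul_one]
  field_simp

lemma AL_min_lt (h₁ : 0 < l₁) (h₂ : 0 < l₂) (r : ℝ) :
    AL l₁ l₂ {y | min y 0 < r}
      = if 0 < r then 1 else ENNReal.ofReal (l₁/(l₁+l₂) * exp (l₂ * r)) := by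
  split_ifs with h
  · have hs : {y : ℝ | min y 0 < r} = univ :=
      eq_univ_of_forall fun y => lt_of_le_of_lt (min_le_right y 0) h
    rw [hs]
    haveI := AL_prob h₁ h₂
    exact measure_univ
  · have hs : {y : ℝ | min y 0 < r} = Iio r := by ext y; simp [min_lt_iff, h]
    rw [hs, AL_Iio h₁ h₂ (le_of_not_gt h)]

lemma AL_max_gt (h₁ : 0 < l₁) (h₂ : 0 < l₂) (s : ℝ) :
    AL l₁ l₂ {x | s < max x 0}
      = if s < 0 then 1 else ENNReal.ofReal (l₂/(l₁+l₂) * exp (-(l₁ * s))) := by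
  split_ifs with h
  · have hs : {x : ℝ | s < max x 0} = univ :=
      eq_univ_of_forall fun x => lt_of_lt_of_le h (le_max_right x 0)
    rw [hs]
    haveI := AL_prob h₁ h₂
    exact measure_univ
  · have hs : {x : ℝ | s < max x 0} = Ioi s := by ext x; simp [lt_max_iff, h]
    rw [hs, AL_Ioi h₁ h₂ (le_of_not_gt h)]

section Params
variable {ρ σ τ : ℝ} (hρ : 0 < ρ) (hσ : 0 < σ) (hτ : 0 < τ)

lemma measurable_hg (t : ℝ) : Measurable (fun x : ℝ =>
    if 0 < max x 0 - t then (1:ℝ≥0∞) else ENNReal.ofReal (σ/(σ+ρ) * exp (ρ*(max x 0 - t)))) := by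
  refine Measurable.ite ?_ measurable_const (ENNReal.measurable_ofReal.comp (by fun_prop))
  exact measurableSet_lt measurable_const (by fun_prop)

include hρ hσ hτ in
lemma hconv {t : ℝ} (ht : 0 ≤ t) :
    ∫⁻ x, AL σ ρ {y | t < max x 0 - min y 0} ∂(AL (ρ+σ) τ)
      = ENNReal.ofReal ((σ+τ)/(ρ+σ+τ) * exp (-(ρ*t))) := by
  have hlam : 0 < ρ + σ := by linarith
  have hcong : ∀ x : ℝ, AL σ ρ {y | t < max x 0 - min y 0}
      = (fun x : ℝ => if 0 < max x 0 - t then (1:ℝ≥0∞)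
          else ENNReal.ofReal (σ/(σ+ρ) * exp (ρ*(max x 0 - t)))) x := by
    intro x
    have hs : {y : ℝ | t < max x 0 - min y 0} = {y : ℝ | min y 0 < max x 0 - t} := by
      ext y; constructor <;> intro hy <;> simp only [mem_setOf_eq] at * <;> linarith
    rw [hs, AL_min_lt hσ hρ (max x 0 - t)]
  rw [lintegral_congr hcong, AL_lintegral _ _ _ (measurable_hg t)]
  rw [← setLIntegral_univ, ← Iic_union_Ioi (a := (0:ℝ)),
    lintegral_union measurableSet_Ioi (Iic_disjoint_Ioi le_rfl),
    ← Ioc_union_Ioi_eq_Ioi ht,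
    lintegral_union measurableSet_Ioi Ioc_disjoint_Ioi_same]
  set C₁ : ℝ := (ρ+σ)*τ/(ρ+σ+τ) * (σ/(σ+ρ) * exp (-(ρ*t))) with hC₁
  have hC₁0 : 0 ≤ C₁ := by positivity
  have hfun1 : ∀ x : ℝ, x ∈ Iic (0:ℝ) → alD (ρ+σ) τ x *
      (if 0 < max x 0 - t then (1:ℝ≥0∞) else ENNReal.ofReal (σ/(σ+ρ) * exp (ρ*(max x 0 - t))))
      = ENNReal.ofReal (C₁ * exp (τ*x)) := by
    intro x hx
    rw [alD_nonpos hlam hτ hx, max_eq_right hx, if_neg (not_lt.2 (by linarith)),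
      ← ENNReal.ofReal_mul (by positivity)]
    congr 1
    rw [hC₁, show ρ*((0:ℝ)-t) = -(ρ*t) from by ring]
    ring
  have hfun2 : ∀ x : ℝ, x ∈ Ioc (0:ℝ) t → alD (ρ+σ) τ x *
      (if 0 < max x 0 - t then (1:ℝ≥0∞) else ENNReal.ofReal (σ/(σ+ρ) * exp (ρ*(max x 0 - t))))
      = ENNReal.ofReal (C₁ * exp (-(σ*x))) := by
    intro x hx
    rw [alD_pos hlam hτ hx.1, max_eq_left hx.1.le, if_neg (not_lt.2 (by linarith [hx.2])),
      ← ENNReal.ofReal_mul (by positivity)]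
    congr 1
    have he : exp (-((ρ+σ)*x)) * exp (ρ*(x-t)) = exp (-(ρ*t)) * exp (-(σ*x)) := by
      rw [← exp_add, ← exp_add]; congr 1; ring
    rw [hC₁]
    linear_combination ((ρ+σ)*τ/(ρ+σ+τ) * (σ/(σ+ρ))) * he
  have hfun3 : ∀ x : ℝ, x ∈ Ioi t → alD (ρ+σ) τ x *
      (if 0 < max x 0 - t then (1:ℝ≥0∞) else ENNReal.ofReal (σ/(σ+ρ) * exp (ρ*(max x 0 - t))))
      = ENNReal.ofReal ((ρ+σ)*τ/(ρ+σ+τ) * exp (-((ρ+σ)*x))) := by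
    intro x hx
    rw [alD_pos hlam hτ (lt_of_le_of_lt ht hx), max_eq_left (le_trans ht (le_of_lt hx)),
      if_pos (by simp only [sub_pos]; exact hx), mul_one]
  rw [setLIntegral_congr_fun measurableSet_Iic hfun1,
    setLIntegral_congr_fun measurableSet_Ioc hfun2,
    setLIntegral_congr_fun measurableSet_Ioi hfun3,
    ← Measure.restrict_congr_set Iio_ae_eq_Iic,
    lint_exp_Iio hτ hC₁0 0, lint_exp_Ioc hσ hC₁0 ht, lint_exp_Ioi hlam (by positivity) t]
  have hmono : exp (-(σ*t)) ≤ exp (-(σ*0)) := exp_le_exp.mpr (by nlinarith)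
  have hb0 : 0 ≤ C₁ * (exp (-(σ*0)) - exp (-(σ*t))) / σ :=
    div_nonneg (mul_nonneg hC₁0 (by linarith)) hσ.le
  rw [← ENNReal.ofReal_add hb0 (by positivity),
    ← ENNReal.ofReal_add (by positivity) (by positivity)]
  congr 1
  have hE : exp (-((ρ+σ)*t)) = exp (-(ρ*t)) * exp (-(σ*t)) := by
    rw [← exp_add]; congr 1; ring
  have e1 : σ + ρ ≠ 0 := by positivity
  have e2 : ρ + σ + τ ≠ 0 := by positivity
  have e3 : τ ≠ 0 := ne_of_gt hτ
  have e4 : σ ≠ 0 := ne_of_gt hσ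
  have e5 : ρ + σ ≠ 0 := by positivity
  rw [hE, hC₁]
  simp only [mul_zero, neg_zero, exp_zero, mul_one]
  field_simp
  ring
end Params

lemma memA {u v a b c : ℝ} (hu : 0 ≤ u) (hv : v ≤ 0) (hb : 0 ≤ b) (hc : c ≤ 0) :
    (u < min (-min 0 a) (max a 0 + b - c) ∧ min (-min 0 a + c - b) (max a 0) < v)
      ↔ (a < -u ∧ -a - v < b - c) := by
  rcases le_or_gt a 0 with h|h
  · rw [min_eq_right h, max_eq_right h]
    simp only [lt_min_iff, min_lt_iff, zero_add]
    constructor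
    · rintro ⟨⟨h1, h2⟩, h3|h3⟩
      · exact ⟨by linarith, by linarith⟩
      · exact absurd h3 (by linarith)
    · rintro ⟨h1, h2⟩
      exact ⟨⟨by linarith, by linarith⟩, Or.inl (by linarith)⟩
  · rw [min_eq_left h.le, max_eq_left h.le]
    simp only [neg_zero, lt_min_iff, min_lt_iff]
    constructor
    · rintro ⟨⟨h1, _⟩, _⟩; exact absurd h1 (by linarith)
    · rintro ⟨h1, _⟩; exact absurd h1 (by linarith)

lemma memB {u v a b c : ℝ} (hu : 0 ≤ u) (hv : 0 < v) (hb : 0 ≤ b) (hc : c ≤ 0) :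
    (u < min (-min 0 a) (max a 0 + b - c) ∧ min (-min 0 a + c - b) (max a 0) < v)
      ↔ (a < -u ∧ u < b - c) := by
  rcases le_or_gt a 0 with h|h
  · rw [min_eq_right h, max_eq_right h]
    simp only [lt_min_iff, min_lt_iff, zero_add]
    constructor
    · rintro ⟨⟨h1, h2⟩, _⟩; exact ⟨by linarith, by linarith⟩
    · rintro ⟨h1, h2⟩; exact ⟨⟨by linarith, by linarith⟩, Or.inr hv⟩
  · rw [min_eq_left h.le, max_eq_left h.le]
    simp only [neg_zero, lt_min_iff, min_lt_iff]
    constructor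
    · rintro ⟨⟨h1, _⟩, _⟩; exact absurd h1 (by linarith)
    · rintro ⟨h1, _⟩; exact absurd h1 (by linarith)

lemma memC {u v a b c : ℝ} (hu : u < 0) (hv : v ≤ 0) (hb : 0 ≤ b) (hc : c ≤ 0) :
    (u < min (-min 0 a) (max a 0 + b - c) ∧ min (-min 0 a + c - b) (max a 0) < v)
      ↔ (-min 0 a - v < b - c) := by
  rcases le_or_gt a 0 with h|h
  · rw [min_eq_right h, max_eq_right h]
    simp only [lt_min_iff, min_lt_iff, zero_add]
    constructor
    · rintro ⟨_, h3|h3⟩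
      · linarith
      · exact absurd h3 (by linarith)
    · intro h1
      exact ⟨⟨by linarith, by linarith⟩, Or.inl (by linarith)⟩
  · rw [min_eq_left h.le, max_eq_left h.le]
    simp only [neg_zero, lt_min_iff, min_lt_iff, zero_add]
    constructor
    · rintro ⟨_, h3|h3⟩
      · linarith
      · exact absurd h3 (by linarith)
    · intro h1
      exact ⟨⟨by linarith, by linarith⟩, Or.inl (by linarith)⟩

lemma memD {u v a b c : ℝ} (hu : u < 0) (hv : 0 < v) (hb : 0 ≤ b) (hc : c ≤ 0) :
    (u < min (-min 0 a) (max a 0 + b - c) ∧ min (-min 0 a + c - b) (max a 0) < v) := by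
  have h1 : min 0 a ≤ 0 := min_le_left 0 a
  have h2 : (0:ℝ) ≤ max a 0 := le_max_right a 0
  refine ⟨lt_min_iff.mpr ⟨by linarith, by linarith⟩, ?_⟩
  rcases le_or_gt a 0 with h|h
  · calc min (-min 0 a + c - b) (max a 0) ≤ max a 0 := min_le_right _ _
      _ = 0 := max_eq_right h
      _ < v := hv
  · calc min (-min 0 a + c - b) (max a 0) ≤ -min 0 a + c - b := min_le_left _ _
      _ = c - b := by rw [min_eq_left h.le]; ring
      _ < v := by linarith

/-- Theorem 4.5(d) (continuous case): the triple `(AL(τ,σ), AL(ρ+σ,τ) ∨ 0, AL(σ,ρ) ∧ 0)`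
is stationary for the zero-temperature limit `R̃^zero_{(1,−1)}` of the beta random polymer
(Bernoulli-exponential FPP / the river delta model). -/
theorem stmt_18 (ρ σ τ : ℝ) (hρ : 0 < ρ) (hσ : 0 < σ) (hτ : 0 < τ) :
    Measure.map Rtz1m1
        ((AL τ σ).prod
          ((Measure.map (fun x : ℝ => max x 0) (AL (ρ + σ) τ)).prod
            (Measure.map (fun x : ℝ => min x 0) (AL σ ρ))))
      = (Measure.map (fun x : ℝ => max x 0) (AL (ρ + σ) τ)).prod
          (Measure.map (fun x : ℝ => min x 0) (AL σ ρ)) := by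
  have hlam : 0 < ρ + σ := by linarith
  haveI hP1 : IsProbabilityMeasure (AL τ σ) := AL_prob hτ hσ
  haveI hP2 : IsProbabilityMeasure (AL (ρ + σ) τ) := AL_prob hlam hτ
  haveI hP3 : IsProbabilityMeasure (AL σ ρ) := AL_prob hσ hρ
  have hmax : Measurable fun x : ℝ => max x 0 := measurable_id.max measurable_const
  have hmin : Measurable fun x : ℝ => min x 0 := measurable_id.min measurable_const
  haveI : IsProbabilityMeasure (Measure.map (fun x : ℝ => max x 0) (AL (ρ + σ) τ)) :=
    Measure.isProbabilityMeasure_map hmax.aemeasurable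
  haveI : IsProbabilityMeasure (Measure.map (fun x : ℝ => min x 0) (AL σ ρ)) :=
    Measure.isProbabilityMeasure_map hmin.aemeasurable
  have hR : Measurable Rtz1m1 := by
    unfold Rtz1m1; fun_prop
  haveI : IsProbabilityMeasure ((AL τ σ).prod
      ((Measure.map (fun x : ℝ => max x 0) (AL (ρ + σ) τ)).prod
        (Measure.map (fun x : ℝ => min x 0) (AL σ ρ)))) := by infer_instance
  haveI : IsProbabilityMeasure (Measure.map Rtz1m1
      ((AL τ σ).prod
        ((Measure.map (fun x : ℝ => max x 0) (AL (ρ + σ) τ)).prod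
          (Measure.map (fun x : ℝ => min x 0) (AL σ ρ))))) :=
    Measure.isProbabilityMeasure_map hR.aemeasurable
  have hCS1 : IsCountablySpanning (range (Ioi : ℝ → Set ℝ)) := by
    refine ⟨fun n => Ioi (-(n:ℝ)), fun n => mem_range_self _, ?_⟩
    ext x
    simp only [mem_iUnion, mem_Ioi, mem_univ, iff_true]
    obtain ⟨n, hn⟩ := exists_nat_gt (-x)
    exact ⟨n, by linarith⟩
  have hCS2 : IsCountablySpanning (range (Iio : ℝ → Set ℝ)) := by
    refine ⟨fun n => Iio (n:ℝ), fun n => mem_range_self _, ?_⟩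
    ext x
    simp only [mem_iUnion, mem_Iio, mem_univ, iff_true]
    exact exists_nat_gt x
  have hgen : (Prod.instMeasurableSpace : MeasurableSpace (ℝ × ℝ))
      = MeasurableSpace.generateFrom (image2 (· ×ˢ ·) (range Ioi) (range Iio)) := by
    refine (generateFrom_eq_prod ?_ ?_ hCS1 hCS2).symm
    · exact ((BorelSpace.measurable_eq (α := ℝ)).trans (borel_eq_generateFrom_Ioi ℝ)).symm
    · exact ((BorelSpace.measurable_eq (α := ℝ)).trans (borel_eq_generateFrom_Iio ℝ)).symm
  refine ext_of_generate_finite _ hgen (isPiSystem_Ioi.prod isPiSystem_Iio) ?_ (by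
    simp [measure_univ])
  rintro s ⟨S1, ⟨u, rfl⟩, S2, ⟨v, rfl⟩, rfl⟩
  have hrect : MeasurableSet (Ioi u ×ˢ Iio v : Set (ℝ × ℝ)) :=
    measurableSet_Ioi.prod measurableSet_Iio
  have hS : MeasurableSet (Rtz1m1 ⁻¹' (Ioi u ×ˢ Iio v)) := hR hrect
  rw [Measure.map_apply hR hrect, Measure.prod_prod,
    Measure.map_apply hmax measurableSet_Ioi, Measure.map_apply hmin measurableSet_Iio]
  have hμu : AL (ρ + σ) τ ((fun x : ℝ => max x 0) ⁻¹' Ioi u)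
      = if u < 0 then 1 else ENNReal.ofReal (τ/(ρ+σ+τ) * exp (-((ρ+σ) * u))) := by
    rw [show ((fun x : ℝ => max x 0) ⁻¹' Ioi u) = {x : ℝ | u < max x 0} from rfl]
    exact AL_max_gt hlam hτ u
  have hνv : AL σ ρ ((fun x : ℝ => min x 0) ⁻¹' Iio v)
      = if 0 < v then 1 else ENNReal.ofReal (σ/(σ+ρ) * exp (ρ * v)) := by
    rw [show ((fun x : ℝ => min x 0) ⁻¹' Iio v) = {x : ℝ | min x 0 < v} from rfl]
    exact AL_min_lt hσ hρ v
  rw [hμu, hνv]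
  have htriple : ((AL τ σ).prod
      ((Measure.map (fun x : ℝ => max x 0) (AL (ρ + σ) τ)).prod
        (Measure.map (fun x : ℝ => min x 0) (AL σ ρ)))) (Rtz1m1 ⁻¹' (Ioi u ×ˢ Iio v))
      = ∫⁻ a, ∫⁻ x, AL σ ρ {y : ℝ | Rtz1m1 (a, max x 0, min y 0) ∈ Ioi u ×ˢ Iio v}
          ∂(AL (ρ + σ) τ) ∂(AL τ σ) := by
    rw [Measure.prod_apply hS]
    refine lintegral_congr fun a => ?_
    have hSa : MeasurableSet (Prod.mk a ⁻¹' (Rtz1m1 ⁻¹' (Ioi u ×ˢ Iio v))) :=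
      hS.preimage measurable_prodMk_left
    rw [Measure.prod_apply hSa,
      lintegral_map (measurable_measure_prodMk_left hSa) hmax]
    refine lintegral_congr fun x => ?_
    rw [Measure.map_apply hmin (hSa.preimage measurable_prodMk_left)]
    rfl
  rw [htriple]
  rcases lt_or_ge u 0 with hu | hu
  · rcases lt_or_ge 0 v with hv | hv
    · -- regime D
      rw [if_pos hu, if_pos hv, one_mul]
      have h1 : ∀ a x : ℝ, {y : ℝ | Rtz1m1 (a, max x 0, min y 0) ∈ Ioi u ×ˢ Iio v} = univ :=
        fun a x => eq_univ_of_forall fun y =>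
          memD hu hv (le_max_right x 0) (min_le_right y 0)
      rw [lintegral_congr fun a => lintegral_congr fun x => by rw [h1 a x, measure_univ]]
      simp [measure_univ]
    · -- regime C
      rw [if_pos hu, if_neg (not_lt.2 hv), one_mul]
      have h1 : ∀ a : ℝ, ∫⁻ x, AL σ ρ {y : ℝ | Rtz1m1 (a, max x 0, min y 0) ∈ Ioi u ×ˢ Iio v}
          ∂(AL (ρ + σ) τ)
          = ENNReal.ofReal ((σ+τ)/(ρ+σ+τ) * exp (-(ρ * (-min 0 a - v)))) := by
        intro a
        have hset : ∀ x : ℝ, {y : ℝ | Rtz1m1 (a, max x 0, min y 0) ∈ Ioi u ×ˢ Iio v}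
            = {y : ℝ | (-min 0 a - v) < max x 0 - min y 0} := by
          intro x; ext y
          exact memC hu hv (le_max_right x 0) (min_le_right y 0)
        rw [lintegral_congr fun x => by rw [hset x]]
        exact hconv hρ hσ hτ (by have := min_le_left (0:ℝ) a; linarith)
      rw [lintegral_congr h1,
        AL_lintegral τ σ _ (Measurable.ennreal_ofReal (by fun_prop))]
      rw [← setLIntegral_univ, ← Iic_union_Ioi (a := (0:ℝ)),
        lintegral_union measurableSet_Ioi (Iic_disjoint_Ioi le_rfl)]
      have hC : (0:ℝ) ≤ τ*σ/(τ+σ) * ((σ+τ)/(ρ+σ+τ)) * exp (ρ*v) := by positivity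
      have hp1 : ∫⁻ a in Iic 0, alD τ σ a *
          ENNReal.ofReal ((σ+τ)/(ρ+σ+τ) * exp (-(ρ * (-min 0 a - v))))
          = ENNReal.ofReal ((τ*σ/(τ+σ) * ((σ+τ)/(ρ+σ+τ)) * exp (ρ*v)) * exp ((σ+ρ)*0) / (σ+ρ)) := by
        rw [setLIntegral_congr_fun measurableSet_Iic (fun a (ha : a ≤ 0) => ?_),
          ← Measure.restrict_congr_set Iio_ae_eq_Iic,
          lint_exp_Iio (by positivity : (0:ℝ) < σ+ρ) hC 0]
        rw [alD_nonpos hτ hσ ha, min_eq_right ha,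
          ← ENNReal.ofReal_mul (by positivity)]
        congr 1
        have he : exp (σ*a) * exp (-(ρ*(-a - v))) = exp (ρ*v) * exp ((σ+ρ)*a) := by
          rw [← exp_add, ← exp_add]; congr 1; ring
        linear_combination (τ*σ/(τ+σ) * ((σ+τ)/(ρ+σ+τ))) * he
      have hp2 : ∫⁻ a in Ioi 0, alD τ σ a *
          ENNReal.ofReal ((σ+τ)/(ρ+σ+τ) * exp (-(ρ * (-min 0 a - v))))
          = ENNReal.ofReal ((τ*σ/(τ+σ) * ((σ+τ)/(ρ+σ+τ)) * exp (ρ*v)) * exp (-(τ*0)) / τ) := by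
        rw [setLIntegral_congr_fun measurableSet_Ioi (fun a (ha : 0 < a) => ?_),
          lint_exp_Ioi hτ hC 0]
        rw [alD_pos hτ hσ ha, min_eq_left ha.le,
          ← ENNReal.ofReal_mul (by positivity)]
        congr 1
        have he : -(ρ * (-(0:ℝ) - v)) = ρ * v := by ring
        rw [he]
        ring
      rw [hp1, hp2, ← ENNReal.ofReal_add (by positivity) (by positivity)]
      congr 1
      have e1 : σ + ρ ≠ 0 := by positivity
      have e2 : ρ + σ + τ ≠ 0 := by positivity
      have e3 : τ ≠ 0 := ne_of_gt hτ
      have e4 : τ + σ ≠ 0 := by positivity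
      simp only [mul_zero, neg_zero, exp_zero, mul_one]
      field_simp
      ring
  · rcases lt_or_ge 0 v with hv | hv
    · -- regime B
      rw [if_neg (not_lt.2 hu), if_pos hv, mul_one]
      have h1 : ∀ a : ℝ, ∫⁻ x, AL σ ρ {y : ℝ | Rtz1m1 (a, max x 0, min y 0) ∈ Ioi u ×ˢ Iio v}
          ∂(AL (ρ + σ) τ)
          = (Iio (-u)).indicator
              (fun _ => ENNReal.ofReal ((σ+τ)/(ρ+σ+τ) * exp (-(ρ*u)))) a := by
        intro a
        rcases lt_or_ge a (-u) with ha | ha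
        · rw [indicator_of_mem (mem_Iio.mpr ha)]
          have hset : ∀ x : ℝ, {y : ℝ | Rtz1m1 (a, max x 0, min y 0) ∈ Ioi u ×ˢ Iio v}
              = {y : ℝ | u < max x 0 - min y 0} := by
            intro x; ext y
            constructor
            · intro h
              exact ((memB hu hv (le_max_right x 0) (min_le_right y 0)).mp h).2
            · intro h
              exact (memB hu hv (le_max_right x 0) (min_le_right y 0)).mpr ⟨ha, h⟩
          rw [lintegral_congr fun x => by rw [hset x]]
          exact hconv hρ hσ hτ hu
        · rw [indicator_of_notMem (fun hmem => absurd (mem_Iio.mp hmem) (not_lt.2 ha))]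
          have hset : ∀ x : ℝ, {y : ℝ | Rtz1m1 (a, max x 0, min y 0) ∈ Ioi u ×ˢ Iio v}
              = (∅ : Set ℝ) := by
            intro x
            refine eq_empty_iff_forall_notMem.mpr fun y hy => ?_
            exact absurd ((memB hu hv (le_max_right x 0) (min_le_right y 0)).mp hy).1
              (not_lt.2 ha)
          rw [lintegral_congr fun x => by rw [hset x]]
          simp
      rw [lintegral_congr h1, lintegral_indicator measurableSet_Iio,
        AL_setLIntegral_Iio τ σ _ measurable_const]
      have hC : (0:ℝ) ≤ τ*σ/(τ+σ) * ((σ+τ)/(ρ+σ+τ) * exp (-(ρ*u))) := by positivity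
      have hout : ∫⁻ a in Iio (-u), alD τ σ a *
          ENNReal.ofReal ((σ+τ)/(ρ+σ+τ) * exp (-(ρ*u))) ∂volume
          = ENNReal.ofReal ((τ*σ/(τ+σ) * ((σ+τ)/(ρ+σ+τ) * exp (-(ρ*u))))
              * exp (σ*(-u)) / σ) := by
        rw [setLIntegral_congr_fun measurableSet_Iio (fun a (ha : a < -u) => ?_),
          lint_exp_Iio hσ hC (-u)]
        rw [alD_nonpos hτ hσ (by linarith : a ≤ 0),
          ← ENNReal.ofReal_mul (by positivity)]
        congr 1
        ring
      rw [hout]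
      congr 1
      have he : exp (-(ρ*u)) * exp (σ*(-u)) = exp (-((ρ+σ)*u)) := by
        rw [← exp_add]; congr 1; ring
      rw [← he]
      have e2 : ρ + σ + τ ≠ 0 := by positivity
      have e4 : τ + σ ≠ 0 := by positivity
      have e5 : σ ≠ 0 := ne_of_gt hσ
      field_simp
      ring
    · -- regime A
      rw [if_neg (not_lt.2 hu), if_neg (not_lt.2 hv),
        ← ENNReal.ofReal_mul (by positivity)]
      have h1 : ∀ a : ℝ, ∫⁻ x, AL σ ρ {y : ℝ | Rtz1m1 (a, max x 0, min y 0) ∈ Ioi u ×ˢ Iio v}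
          ∂(AL (ρ + σ) τ)
          = (Iio (-u)).indicator
              (fun a => ENNReal.ofReal ((σ+τ)/(ρ+σ+τ) * exp (-(ρ * (-a - v))))) a := by
        intro a
        rcases lt_or_ge a (-u) with ha | ha
        · rw [indicator_of_mem (mem_Iio.mpr ha)]
          have hset : ∀ x : ℝ, {y : ℝ | Rtz1m1 (a, max x 0, min y 0) ∈ Ioi u ×ˢ Iio v}
              = {y : ℝ | (-a - v) < max x 0 - min y 0} := by
            intro x; ext y
            constructor
            · intro h
              exact ((memA hu hv (le_max_right x 0) (min_le_right y 0)).mp h).2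
            · intro h
              exact (memA hu hv (le_max_right x 0) (min_le_right y 0)).mpr ⟨ha, h⟩
          rw [lintegral_congr fun x => by rw [hset x]]
          exact hconv hρ hσ hτ (by linarith)
        · rw [indicator_of_notMem (fun hmem => absurd (mem_Iio.mp hmem) (not_lt.2 ha))]
          have hset : ∀ x : ℝ, {y : ℝ | Rtz1m1 (a, max x 0, min y 0) ∈ Ioi u ×ˢ Iio v}
              = (∅ : Set ℝ) := by
            intro x
            refine eq_empty_iff_forall_notMem.mpr fun y hy => ?_
            exact absurd ((memA hu hv (le_max_right x 0) (min_le_right y 0)).mp hy).1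
              (not_lt.2 ha)
          rw [lintegral_congr fun x => by rw [hset x]]
          simp
      rw [lintegral_congr h1, lintegral_indicator measurableSet_Iio,
        AL_setLIntegral_Iio τ σ _ (Measurable.ennreal_ofReal (by fun_prop))]
      have hC : (0:ℝ) ≤ τ*σ/(τ+σ) * ((σ+τ)/(ρ+σ+τ)) * exp (ρ*v) := by positivity
      have hout : ∫⁻ a in Iio (-u), alD τ σ a *
          ENNReal.ofReal ((σ+τ)/(ρ+σ+τ) * exp (-(ρ * (-a - v)))) ∂volume
          = ENNReal.ofReal ((τ*σ/(τ+σ) * ((σ+τ)/(ρ+σ+τ)) * exp (ρ*v))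
              * exp ((σ+ρ)*(-u)) / (σ+ρ)) := by
        rw [setLIntegral_congr_fun measurableSet_Iio (fun a (ha : a < -u) => ?_),
          lint_exp_Iio (by positivity : (0:ℝ) < σ+ρ) hC (-u)]
        rw [alD_nonpos hτ hσ (by linarith : a ≤ 0),
          ← ENNReal.ofReal_mul (by positivity)]
        congr 1
        have he : exp (σ*a) * exp (-(ρ*(-a - v))) = exp (ρ*v) * exp ((σ+ρ)*a) := by
          rw [← exp_add, ← exp_add]; congr 1; ring
        linear_combination (τ*σ/(τ+σ) * ((σ+τ)/(ρ+σ+τ))) * he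
      rw [hout]
      congr 1
      have he : exp ((σ+ρ)*(-u)) = exp (-((ρ+σ)*u)) := by congr 1; ring
      rw [he]
      have e1 : σ + ρ ≠ 0 := by positivity
      have e2 : ρ + σ + τ ≠ 0 := by positivity
      have e4 : τ + σ ≠ 0 := by positivity
      field_simp
      ring
end
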